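/- arXiv:2307.07583 — 12 statements merged into one kernel-verified Lean document; each statement's English description precedes it below -/
import Mathlib

section
/- Let α > 1 be a real number and let x_1 ≤ x_2 ≤ ⋯ ≤ x_n be real numbers. Define x′_i = Σ_{j=1}^{i−1} min(α, x_{j+1} − x_j) for i = 1,…,n (the empty sum being 0). Then 0 ≤ x′_1 ≤ x′_2 ≤ ⋯ ≤ x′_n ≤ α·(n−1), and for all i, j ∈ {1,…,n}: |x′_i − x′_j| ≥ α if and only if |x_i − x_j| ≥ α, and |x′_i − x′_j| ≤ 1 if and only if |x_i − x_j| ≤ 1. -/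
/-- Capping the consecutive gaps of a sorted list of reals at a threshold
`α > 1` produces values `x'` in `[0, α(n-1)]`, sorted, such that `|x'_i - x'_j| ≥ α` iff
`|x_i - x_j| ≥ α` and `|x'_i - x'_j| ≤ 1` iff `|x_i - x_j| ≤ 1`. -/
theorem stmt_1 (α : ℝ) (hα : 1 < α) (n : ℕ) (hn : 1 ≤ n)
    (x : ℕ → ℝ) (hmono : ∀ i j, i ≤ j → j < n → x i ≤ x j)
    (x' : ℕ → ℝ)
    (hx' : ∀ i, x' i = ∑ j ∈ Finset.range i, min α (x (j + 1) - x j)) :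
    (∀ i, i < n → 0 ≤ x' i) ∧
    (∀ i j, i ≤ j → j < n → x' i ≤ x' j) ∧
    (∀ i, i < n → x' i ≤ α * ((n : ℝ) - 1)) ∧
    (∀ i j, i < n → j < n →
      (α ≤ |x' i - x' j| ↔ α ≤ |x i - x j|) ∧
      (|x' i - x' j| ≤ 1 ↔ |x i - x j| ≤ 1)) := by
  have hα0 : (0:ℝ) ≤ α := le_of_lt (lt_trans one_pos hα)
  have hg : ∀ k, k + 1 < n → 0 ≤ x (k + 1) - x k := fun k hk =>
    sub_nonneg.2 (hmono k (k + 1) (Nat.le_succ k) hk)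
  have hterm : ∀ k, k + 1 < n → 0 ≤ min α (x (k + 1) - x k) := fun k hk =>
    le_min hα0 (hg k hk)
  have hsum : ∀ i j, i ≤ j → x' j - x' i = ∑ k ∈ Finset.Ico i j, min α (x (k + 1) - x k) := by
    intro i j hij
    rw [hx' i, hx' j, Finset.sum_Ico_eq_sub _ hij]
  have htele : ∀ i j, i ≤ j → (∑ k ∈ Finset.Ico i j, (x (k + 1) - x k)) = x j - x i := by
    intro i j hij
    rw [Finset.sum_Ico_eq_sub _ hij, Finset.sum_range_sub, Finset.sum_range_sub]
    ring
  have key1 : ∀ i j, i ≤ j → j < n → x' j - x' i ≤ x j - x i := by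
    intro i j hij hjn
    rw [hsum i j hij, ← htele i j hij]
    exact Finset.sum_le_sum fun k _ => min_le_right _ _
  have key2 : ∀ i j, i ≤ j → j < n → min α (x j - x i) ≤ x' j - x' i := by
    intro i j hij hjn
    rw [hsum i j hij]
    by_cases hc : ∀ k ∈ Finset.Ico i j, x (k + 1) - x k ≤ α
    · calc min α (x j - x i) ≤ x j - x i := min_le_right _ _
        _ = ∑ k ∈ Finset.Ico i j, (x (k + 1) - x k) := (htele i j hij).symm
        _ = ∑ k ∈ Finset.Ico i j, min α (x (k + 1) - x k) := by
            exact Finset.sum_congr rfl fun k hk => (min_eq_right (hc k hk)).symm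
    · push_neg at hc
      obtain ⟨k₀, hk₀, hk₀'⟩ := hc
      have hk₀n : k₀ + 1 < n := by
        have := (Finset.mem_Ico.1 hk₀).2
        omega
      calc min α (x j - x i) ≤ α := min_le_left _ _
        _ = min α (x (k₀ + 1) - x k₀) := (min_eq_left hk₀'.le).symm
        _ ≤ ∑ k ∈ Finset.Ico i j, min α (x (k + 1) - x k) :=
            Finset.single_le_sum (fun k hk => hterm k (by
              have := (Finset.mem_Ico.1 hk).2; omega)) hk₀
  have hmono' : ∀ i j, i ≤ j → j < n → x' i ≤ x' j := by
    intro i j hij hjn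
    have h : 0 ≤ x' j - x' i := by
      rw [hsum i j hij]
      exact Finset.sum_nonneg fun k hk => hterm k (by
        have := (Finset.mem_Ico.1 hk).2; omega)
    linarith
  have main : ∀ i j, i ≤ j → j < n →
      (α ≤ x' j - x' i ↔ α ≤ x j - x i) ∧ (x' j - x' i ≤ 1 ↔ x j - x i ≤ 1) := by
    intro i j hij hjn
    have k1 := key1 i j hij hjn
    have k2 := key2 i j hij hjn
    constructor
    · constructor
      · intro h; linarith
      · intro h; have hm : min α (x j - x i) = α := min_eq_left h; linarith
    · constructor
      · intro h
        rcases le_or_gt (x j - x i) α with hc | hc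
        · have hm : min α (x j - x i) = x j - x i := min_eq_right hc; linarith
        · exfalso
          have hm : min α (x j - x i) = α := min_eq_left hc.le
          linarith
      · intro h; linarith
  refine ⟨?_, hmono', ?_, ?_⟩
  · intro i hi
    have h0 : x' 0 = 0 := by rw [hx']; simp
    have := hmono' 0 i (Nat.zero_le i) hi
    linarith
  · intro i hi
    have hin : (i : ℝ) ≤ (n : ℝ) - 1 := by
      have : (i : ℝ) + 1 ≤ n := by exact_mod_cast Nat.succ_le_of_lt hi
      linarith
    calc x' i = ∑ j ∈ Finset.range i, min α (x (j + 1) - x j) := hx' i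
      _ ≤ ∑ j ∈ Finset.range i, α := Finset.sum_le_sum fun k _ => min_le_left _ _
      _ = (i : ℝ) * α := by simp [mul_comm]
      _ ≤ α * ((n : ℝ) - 1) := by nlinarith
  · intro i j hi hj
    rcases le_total i j with hij | hij
    · have h := main i j hij hj
      have h1 : |x' i - x' j| = x' j - x' i := by
        rw [abs_sub_comm, abs_of_nonneg (by linarith [hmono' i j hij hj])]
      have h2 : |x i - x j| = x j - x i := by
        rw [abs_sub_comm, abs_of_nonneg (by linarith [hmono i j hij hj])]
      rw [h1, h2]; exact h
    · have h := main j i hij hi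
      have h1 : |x' i - x' j| = x' i - x' j := by
        rw [abs_of_nonneg (by linarith [hmono' j i hij hi])]
      have h2 : |x i - x j| = x i - x j := by
        rw [abs_of_nonneg (by linarith [hmono j i hij hi])]
      rw [h1, h2]; exact h
end

section
/- Let ε ∈ (0, 1/2), α > 1, and M ≥ 0 be real numbers, and set K = 2⌈1/ε⌉ + 1. There exist maps g : [0, M] → [−(0.5+ε)α, (0.5+ε)α]^K and h : [0, M] → [0, M/2] such that for all a, b ∈ [0, M]: min(|a − b|, α) = min( max( ‖g(a) − g(b)‖_∞ , |h(a) − h(b)| ), α ). -/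
/-!
Each coordinate of `g` is a triangle wave of period `P = 2W + α` clipped at height
`W = (1 + 2ε)α`, shifted by a multiple of `s = P / K ≤ W - α`. The waves are 1-Lipschitz,
and for `|a - b| < 2α` some shift moves `b` to within `s` after a trough, from where the wave
climbs with slope one for at least `min |a - b| α` before it is clipped or turns down.
The coordinate `h a = a / 2` accounts for `|a - b| ≥ 2α`.
-/

open Set

theorem AddCircle.norm_coe_eq_min {P y : ℝ} (hP : 0 < P) (hy : y ∈ Icc 0 P) :
    ‖(y : AddCircle P)‖ = min y (P - y) := by
  rcases le_total y (P / 2) with hle | hge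
  · rw [(AddCircle.norm_coe_eq_abs_iff P hP.ne').2
        (by rw [abs_of_nonneg hy.1, abs_of_pos hP]; exact hle),
      abs_of_nonneg hy.1, min_eq_left (by linarith)]
  · have hshift : ((y - P : ℝ) : AddCircle P) = y := by
      rw [AddCircle.coe_sub, AddCircle.coe_period, sub_zero]
    rw [← hshift, (AddCircle.norm_coe_eq_abs_iff P hP.ne').2
        (by rw [abs_of_nonpos (by linarith [hy.2]), abs_of_pos hP]; linarith),
      abs_of_nonpos (by linarith [hy.2]), neg_sub, min_eq_right (by linarith)]

noncomputable def clippedWave (P W x : ℝ) : ℝ := min W ‖(x : AddCircle P)‖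

section clippedWave

variable {P W : ℝ}

theorem clippedWave_mem_Icc (hW : 0 ≤ W) (x : ℝ) : clippedWave P W x ∈ Icc 0 W :=
  ⟨le_min hW (norm_nonneg _), min_le_left _ _⟩

theorem abs_clippedWave_sub_le (x y : ℝ) : |clippedWave P W x - clippedWave P W y| ≤ |x - y| :=
  calc |clippedWave P W x - clippedWave P W y|
      ≤ |‖(x : AddCircle P)‖ - ‖(y : AddCircle P)‖| := by
        simpa [clippedWave] using
          abs_min_sub_min_le_max W ‖(x : AddCircle P)‖ W ‖(y : AddCircle P)‖
    _ ≤ ‖((x - y : ℝ) : AddCircle P)‖ := by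
        rw [AddCircle.coe_sub]; exact abs_norm_sub_norm_le _ _
    _ ≤ |x - y| := QuotientAddGroup.norm_mk_le_norm

theorem clippedWave_add_intCast_mul (n : ℤ) (x : ℝ) :
    clippedWave P W (x + n * P) = clippedWave P W x := by
  rw [clippedWave, AddCircle.coe_add, ← zsmul_eq_mul, AddCircle.coe_zsmul, AddCircle.coe_period,
    smul_zero, add_zero, clippedWave]

end clippedWave

theorem exists_fin_mul_add_intCast_mul_mem_Icc {s : ℝ} (hs : 0 < s) {K : ℕ} (hK : 0 < K)
    (b : ℝ) :
    ∃ (i : Fin K) (n : ℤ), b + i * s + n * (K * s) ∈ Icc 0 s := by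
  set m : ℤ := ⌈-b / s⌉
  have hm : b + m * s ∈ Icc 0 s := by
    have h1 : -b / s ≤ m := Int.le_ceil _
    have h2 : (m : ℝ) < -b / s + 1 := Int.ceil_lt_add_one _
    rw [div_le_iff₀ hs] at h1
    rw [← sub_lt_iff_lt_add, lt_div_iff₀ hs] at h2
    constructor <;> nlinarith
  have hmod_nonneg : 0 ≤ m % K := Int.emod_nonneg m (by omega)
  have hmod_lt : m % K < K := Int.emod_lt_of_pos m (by omega)
  refine ⟨⟨(m % K).toNat, by omega⟩, m / K, ?_⟩
  have hdecomp : (((m % K).toNat : ℕ) : ℝ) + K * (m / K : ℤ) = m := by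
    have := Int.emod_add_mul_ediv m K
    exact_mod_cast (by omega : ((m % K).toNat : ℤ) + K * (m / K) = m)
  convert hm using 1
  linear_combination s * hdecomp

theorem exists_min_le_clippedWave_sub {W α s : ℝ} {K : ℕ} (hs : 0 < s) (hsW : s ≤ W - α)
    (hP : 2 * W + α ≤ K * s) {a b : ℝ} (hba : b ≤ a) (hab : a - b < 2 * α) :
    ∃ i : Fin K, min (a - b) α ≤
      clippedWave (K * s) W (a + i * s) - clippedWave (K * s) W (b + i * s) := by
  have hK : 0 < K := by
    have : (0 : ℝ) < K * s := by linarith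
    exact_mod_cast pos_of_mul_pos_left this hs.le
  obtain ⟨i, n, hr0, hrs⟩ := exists_fin_mul_add_intCast_mul_mem_Icc hs hK b
  set r := b + i * s + n * (K * s)
  have hexcess : a - b - min (a - b) α ≤ α := by
    rcases min_cases (a - b) α with ⟨h, -⟩ | ⟨h, -⟩ <;> linarith
  obtain ⟨htd, htα⟩ : min (a - b) α ≤ a - b ∧ min (a - b) α ≤ α :=
    ⟨min_le_left _ _, min_le_right _ _⟩
  set t := min (a - b) α
  have hb : clippedWave (K * s) W (b + i * s) ≤ r := by
    rw [← clippedWave_add_intCast_mul n]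
    calc _ ≤ ‖(r : AddCircle (K * s))‖ := min_le_right _ _
      _ ≤ ‖r‖ := QuotientAddGroup.norm_mk_le_norm
      _ = r := Real.norm_of_nonneg hr0
  have ha : r + t ≤ clippedWave (K * s) W (a + i * s) := by
    rw [← clippedWave_add_intCast_mul n, show a + i * s + n * (K * s) = r + (a - b) by ring,
      clippedWave, AddCircle.norm_coe_eq_min (by linarith) ⟨by linarith, by linarith⟩]
    exact le_min (by linarith) (le_min (by linarith) (by linarith))
  exact ⟨i, by linarith⟩

noncomputable def shiftedWaves (K : ℕ) (s W a : ℝ) : Fin K → ℝ :=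
  fun i ↦ clippedWave (K * s) W (a + i * s) - W / 2

section shiftedWaves

variable {K : ℕ} {s W : ℝ}

theorem shiftedWaves_mem_Icc (hW : 0 ≤ W) (a : ℝ) (i : Fin K) :
    shiftedWaves K s W a i ∈ Icc (-(W / 2)) (W / 2) := by
  have := clippedWave_mem_Icc (P := K * s) hW (a + i * s)
  constructor <;> simp only [shiftedWaves] <;> linarith [this.1, this.2]

theorem norm_shiftedWaves_sub_le (a b : ℝ) :
    ‖shiftedWaves K s W a - shiftedWaves K s W b‖ ≤ |a - b| := by
  refine (pi_norm_le_iff_of_nonneg (abs_nonneg _)).2 fun i ↦ ?_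
  simpa [shiftedWaves, Real.norm_eq_abs] using abs_clippedWave_sub_le (a + i * s) (b + i * s)

theorem min_le_norm_shiftedWaves_sub {α : ℝ} (hs : 0 < s) (hsW : s ≤ W - α)
    (hP : 2 * W + α ≤ K * s) {a b : ℝ} (hab : |a - b| < 2 * α) :
    min |a - b| α ≤ ‖shiftedWaves K s W a - shiftedWaves K s W b‖ := by
  wlog hba : b ≤ a generalizing a b
  · rw [abs_sub_comm, norm_sub_rev]
    exact this (by rwa [abs_sub_comm]) (by linarith)
  rw [abs_of_nonneg (sub_nonneg.2 hba)] at hab ⊢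
  obtain ⟨i, hi⟩ := exists_min_le_clippedWave_sub hs hsW hP hba hab
  calc min (a - b) α ≤ ‖(shiftedWaves K s W a - shiftedWaves K s W b) i‖ := by
        simpa [shiftedWaves, Real.norm_eq_abs] using hi.trans (le_abs_self _)
    _ ≤ _ := norm_le_pi_norm _ i

end shiftedWaves

theorem min_eq_min_max_half {d u α : ℝ} (hd : 0 ≤ d) (hu : u ≤ d)
    (hlow : d < 2 * α → min d α ≤ u) : min d α = min (max u (d / 2)) α := by
  rcases lt_or_ge d (2 * α) with h | h
  · have hu_low := hlow h
    apply le_antisymm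
    · exact le_min (hu_low.trans (le_max_left _ _)) (min_le_right _ _)
    · exact min_le_min_right _ (max_le hu (by linarith))
  · have hα : α ≤ d / 2 := by linarith
    rw [min_eq_right (le_max_of_le_right hα), min_eq_right (by linarith)]

theorem stmt_3_general (ε α M : ℝ) (hε : ε ∈ Set.Ioo (0 : ℝ) (1 / 2)) (hα : 1 < α)
    (K : ℕ) (hK : K = 2 * ⌈1 / ε⌉₊ + 1) :
    ∃ (g : ℝ → Fin K → ℝ) (h : ℝ → ℝ),
      (∀ a ∈ Set.Icc (0 : ℝ) M,
        (∀ i, g a i ∈ Set.Icc (-((0.5 + ε) * α)) ((0.5 + ε) * α)) ∧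
        h a ∈ Set.Icc (0 : ℝ) (M / 2)) ∧
      (∀ a ∈ Set.Icc (0 : ℝ) M, ∀ b ∈ Set.Icc (0 : ℝ) M,
        min |a - b| α = min (max ‖g a - g b‖ |h a - h b|) α) := by
  obtain ⟨hε0, hε2⟩ := hε
  set W := (1 + 2 * ε) * α
  set s := (2 * W + α) / K
  have hK0 : (0 : ℝ) < K := by rw [hK]; positivity
  have hKs : K * s = 2 * W + α := mul_div_cancel₀ _ hK0.ne'
  have hs : 0 < s := by positivity
  have hsW : s ≤ W - α := by
    have hceil : 2 / ε + 1 ≤ (K : ℝ) := by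
      rw [hK]; push_cast; linarith [Nat.le_ceil (1 / ε), show 2 / ε = 2 * (1 / ε) by ring]
    rw [div_le_iff₀ hK0]
    calc 2 * W + α ≤ 4 * α + 2 * ε * α := by nlinarith
      _ = 2 * ε * α * (2 / ε + 1) := by field_simp; ring
      _ ≤ 2 * ε * α * K := by gcongr
      _ = (W - α) * K := by ring
  refine ⟨shiftedWaves K s W, fun a ↦ a / 2, fun a ha ↦ ⟨fun i ↦ ?_, ?_⟩,
    fun a _ b _ ↦ ?_⟩
  · rw [show (0.5 + ε) * α = W / 2 by ring]
    exact shiftedWaves_mem_Icc (by positivity) a i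
  · exact ⟨by linarith [ha.1], by linarith [ha.2]⟩
  · rw [← sub_div, abs_div, abs_two]
    exact min_eq_min_max_half (abs_nonneg _) (norm_shiftedWaves_sub_le a b)
      (min_le_norm_shiftedWaves_sub hs hsW hKs.ge)

/-- There are maps `g : [0,M] → [-(0.5+ε)α, (0.5+ε)α]^K` (with
`K = 2⌈1/ε⌉ + 1`) and `h : [0,M] → [0, M/2]` such that for all `a, b ∈ [0,M]`,
`min |a-b| α = min (max ‖g a - g b‖_∞ |h a - h b|) α`.  (Here `‖·‖` on `Fin K → ℝ` is the
sup norm.) -/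
theorem stmt_3 (ε α M : ℝ) (hε : ε ∈ Set.Ioo (0 : ℝ) (1 / 2)) (hα : 1 < α) (hM : 0 ≤ M)
    (K : ℕ) (hK : K = 2 * ⌈1 / ε⌉₊ + 1) :
    ∃ (g : ℝ → Fin K → ℝ) (h : ℝ → ℝ),
      (∀ a ∈ Set.Icc (0 : ℝ) M,
        (∀ i, g a i ∈ Set.Icc (-((0.5 + ε) * α)) ((0.5 + ε) * α)) ∧
        h a ∈ Set.Icc (0 : ℝ) (M / 2)) ∧
      (∀ a ∈ Set.Icc (0 : ℝ) M, ∀ b ∈ Set.Icc (0 : ℝ) M,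
        min |a - b| α = min (max ‖g a - g b‖ |h a - h b|) α) :=
  stmt_3_general ε α M hε hα K hK
end

section
/- Let ε ∈ (0, 1/2) and α > 1 be real numbers and n ≥ 2 an integer. There exist a positive integer D with D ≤ 4⌈1/ε⌉·⌈log₂ n⌉ and a map g : [0, α·n] → [−(0.5+ε)α, (0.5+ε)α]^D such that for all a, b ∈ [0, α·n]: min(|a − b|, α) = min(‖g(a) − g(b)‖_∞, α). -/
set_option maxHeartbeats 1600000

noncomputable def rmod (P x : ℝ) : ℝ := x - P * ⌊x / P⌋

lemma rmod_decomp (P x : ℝ) : x = rmod P x + P * ⌊x / P⌋ := by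
  unfold rmod; ring

lemma rmod_nonneg {P : ℝ} (hP : 0 < P) (x : ℝ) : 0 ≤ rmod P x := by
  have h1 : (⌊x / P⌋ : ℝ) ≤ x / P := Int.floor_le _
  have h2 : P * (⌊x / P⌋ : ℝ) ≤ P * (x / P) := mul_le_mul_of_nonneg_left h1 hP.le
  have h3 : P * (x / P) = x := by field_simp
  unfold rmod; linarith

lemma rmod_lt {P : ℝ} (hP : 0 < P) (x : ℝ) : rmod P x < P := by
  have h1 : x / P < (⌊x / P⌋ : ℝ) + 1 := Int.lt_floor_add_one _
  have h2 : P * (x / P) < P * ((⌊x / P⌋ : ℝ) + 1) := mul_lt_mul_of_pos_left h1 hP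
  have h3 : P * (x / P) = x := by field_simp
  unfold rmod; nlinarith

lemma rmod_unique {P : ℝ} (hP : 0 < P) (x y : ℝ) (k : ℤ) (h1 : 0 ≤ y) (h2 : y < P)
    (h3 : x = y + P * k) : rmod P x = y := by
  have hx : x / P = y / P + k := by rw [h3]; field_simp
  have hfl : ⌊x / P⌋ = k := by
    rw [Int.floor_eq_iff]
    constructor
    · rw [hx]; have : 0 ≤ y / P := div_nonneg h1 hP.le; linarith
    · rw [hx]; have : y / P < 1 := (div_lt_one hP).mpr h2; push_cast; linarith
  unfold rmod; rw [hfl, h3]; ring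

lemma rmod_neg {P x : ℝ} (hP : 0 < P) (hx : 0 < rmod P x) : rmod P (-x) = P - rmod P x := by
  apply rmod_unique hP _ _ (-⌊x / P⌋ - 1)
  · linarith [rmod_lt hP x]
  · linarith
  · have h := rmod_decomp P x
    push_cast
    linarith [h]

noncomputable def clamp (h z : ℝ) : ℝ := min h (max (-h) z)

lemma clamp_le {h : ℝ} (z : ℝ) : clamp h z ≤ h := min_le_left _ _

lemma neg_le_clamp {h : ℝ} (hh : 0 ≤ h) (z : ℝ) : -h ≤ clamp h z :=
  le_min (by linarith) (le_max_left _ _)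

lemma abs_clamp_le {h : ℝ} (hh : 0 ≤ h) (z : ℝ) : |clamp h z| ≤ h :=
  abs_le.mpr ⟨neg_le_clamp hh z, clamp_le z⟩

lemma clamp_of_le {h z : ℝ} (hh : 0 ≤ h) (hz : z ≤ -h) : clamp h z = -h := by
  unfold clamp
  rw [max_eq_left hz, min_eq_right (by linarith)]

lemma clamp_of_mem {h z : ℝ} (h1 : -h ≤ z) (h2 : z ≤ h) : clamp h z = z := by
  unfold clamp
  rw [max_eq_right h1, min_eq_right h2]

lemma clamp_neg {h : ℝ} (hh : 0 ≤ h) (z : ℝ) : clamp h (-z) = - clamp h z := by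
  rcases le_total z (-h) with h1 | h1
  · rw [clamp_of_le hh h1]
    unfold clamp
    rw [max_eq_right (by linarith : -h ≤ -z), min_eq_left (by linarith : h ≤ -z)]
    ring
  · rcases le_total h z with h2 | h2
    · have hz : clamp h z = h := by
        unfold clamp
        rw [max_eq_right (by linarith : -h ≤ z), min_eq_left h2]
      rw [hz, clamp_of_le hh (by linarith : -z ≤ -h)]
    · rw [clamp_of_mem (by linarith) h2,
        clamp_of_mem (by linarith : -h ≤ -z) (by linarith : -z ≤ h)]

lemma clamp_lip {h : ℝ} (a b : ℝ) : |clamp h a - clamp h b| ≤ |a - b| := by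
  have habs : ∀ p q : ℝ, p ≤ q + |p - q| := fun p q => by
    have := le_abs_self (p - q); linarith
  have kmax : ∀ p q : ℝ, max (-h) p - max (-h) q ≤ |p - q| := by
    intro p q
    have h1 : max (-h) p ≤ max (-h) (q + |p - q|) := max_le_max le_rfl (habs p q)
    have h2 : max (-h) (q + |p - q|) ≤ max (-h + |p - q|) (q + |p - q|) :=
      max_le_max (by linarith [abs_nonneg (p - q)]) le_rfl
    have h3 : max (-h + |p - q|) (q + |p - q|) = max (-h) q + |p - q| :=
      max_add_add_right _ _ _
    linarith
  have kmin : ∀ p q : ℝ, min h p - min h q ≤ |p - q| := by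
    intro p q
    have h1 : min h p ≤ min h (q + |p - q|) := min_le_min le_rfl (habs p q)
    have h2 : min h (q + |p - q|) ≤ min (h + |p - q|) (q + |p - q|) :=
      min_le_min (by linarith [abs_nonneg (p - q)]) le_rfl
    have h3 : min (h + |p - q|) (q + |p - q|) = min h q + |p - q| :=
      min_add_add_right _ _ _
    linarith
  have hmaxabs : |max (-h) a - max (-h) b| ≤ |a - b| := by
    rw [abs_sub_le_iff]
    refine ⟨kmax a b, ?_⟩
    have := kmax b a; rwa [abs_sub_comm] at this
  unfold clamp
  rw [abs_sub_le_iff]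
  constructor
  · exact (kmin _ _).trans hmaxabs
  · have := kmin (max (-h) b) (max (-h) a)
    rw [abs_sub_comm] at hmaxabs
    exact this.trans hmaxabs

noncomputable def profile (h P y : ℝ) : ℝ := clamp h (P/4 - |y - P/2|)

noncomputable def wave (h P x : ℝ) : ℝ := profile h P (rmod P x)

lemma profile_lip {h P : ℝ} (y z : ℝ) : |profile h P y - profile h P z| ≤ |y - z| := by
  refine (clamp_lip _ _).trans ?_
  have h1 : (P/4 - |y - P/2|) - (P/4 - |z - P/2|) = |z - P/2| - |y - P/2| := by ring
  rw [h1]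
  have := abs_abs_sub_abs_le_abs_sub (z - P/2) (y - P/2)
  have h2 : |z - P/2 - (y - P/2)| = |y - z| := by
    rw [show z - P/2 - (y - P/2) = z - y by ring, abs_sub_comm]
  rw [h2] at this
  exact this

lemma profile_zero {h P : ℝ} (hh : 0 ≤ h) (hP4 : 4*h ≤ P) (hP : 0 < P) :
    profile h P 0 = -h := by
  unfold profile
  rw [show (0:ℝ) - P/2 = -(P/2) by ring, abs_neg, abs_of_nonneg (by linarith : (0:ℝ) ≤ P/2)]
  exact clamp_of_le hh (by linarith)

lemma profile_P {h P : ℝ} (hh : 0 ≤ h) (hP4 : 4*h ≤ P) (hP : 0 < P) :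
    profile h P P = -h := by
  unfold profile
  rw [show P - P/2 = P/2 by ring, abs_of_nonneg (by linarith : (0:ℝ) ≤ P/2)]
  exact clamp_of_le hh (by linarith)

lemma profile_bot {h P y : ℝ} (hh : 0 ≤ h) (hP4 : 4*h ≤ P) (h0 : 0 ≤ y) (h1 : y ≤ P/4 - h) :
    profile h P y = -h := by
  unfold profile
  rw [abs_of_nonpos (by linarith : y - P/2 ≤ 0)]
  exact clamp_of_le hh (by linarith)

lemma profile_rise {h P y : ℝ} (hh : 0 ≤ h) (hP4 : 4*h ≤ P) (h0 : P/4 - h ≤ y)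
    (h1 : y ≤ P/4 + h) : profile h P y = y - P/4 := by
  unfold profile
  rw [abs_of_nonpos (by linarith : y - P/2 ≤ 0)]
  rw [show P/4 - -(y - P/2) = y - P/4 by ring]
  exact clamp_of_mem (by linarith) (by linarith)

lemma profile_fall {h P y : ℝ} (hh : 0 ≤ h) (hP4 : 4*h ≤ P) (h0 : 3*P/4 - h ≤ y)
    (h1 : y ≤ 3*P/4 + h) : profile h P y = 3*P/4 - y := by
  unfold profile
  rw [abs_of_nonneg (by linarith : 0 ≤ y - P/2)]
  rw [show P/4 - (y - P/2) = 3*P/4 - y by ring]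
  exact clamp_of_mem (by linarith) (by linarith)

lemma profile_mid {h c P y : ℝ} (hc : 0 ≤ c) (h0 : P/4 + h - c ≤ y)
    (h1 : y ≤ 3*P/4 - h + c) : h - c ≤ profile h P y := by
  unfold profile
  have habs : |y - P/2| ≤ P/4 - h + c := abs_le.mpr ⟨by linarith, by linarith⟩
  have hinner : h - c ≤ P/4 - |y - P/2| := by linarith
  unfold clamp
  exact le_min (by linarith) (le_trans hinner (le_max_right _ _))
lemma wave_abs_le {h P : ℝ} (hh : 0 ≤ h) (x : ℝ) : |wave h P x| ≤ h :=
  abs_clamp_le hh _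

lemma wave_lip {h P : ℝ} (hh : 0 ≤ h) (hP4 : 4*h ≤ P) (hP : 0 < P) (x y : ℝ) :
    |wave h P x - wave h P y| ≤ |x - y| := by
  wlog hxy : x ≤ y generalizing x y
  · rw [abs_sub_comm, abs_sub_comm x y]; exact this y x (by linarith)
  set d := y - x with hd
  have hd0 : 0 ≤ d := by simp [hd]; linarith
  have habsxy : |x - y| = d := by rw [abs_sub_comm, abs_of_nonneg hd0]
  rw [habsxy]
  by_cases hbig : 2*h ≤ d
  · calc |wave h P x - wave h P y| ≤ |wave h P x| + |wave h P y| := abs_sub _ _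
      _ ≤ h + h := add_le_add (wave_abs_le hh x) (wave_abs_le hh y)
      _ ≤ d := by linarith
  · push_neg at hbig
    set u := rmod P x with hu
    have hu0 : 0 ≤ u := rmod_nonneg hP x
    have huP : u < P := rmod_lt hP x
    have hx : x = u + P * ⌊x/P⌋ := rmod_decomp P x
    by_cases hcase : u + d < P
    · have hy : rmod P y = u + d := by
        apply rmod_unique hP _ _ ⌊x/P⌋ (by linarith) hcase
        simp only [hd]; linarith [hx]
      rw [wave, wave, hy, ← hu]
      have := profile_lip (h := h) (P := P) u (u + d)
      have h2 : |u - (u + d)| = d := by rw [show u - (u+d) = -d by ring, abs_neg, abs_of_nonneg hd0]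
      rwa [h2] at this
    · push_neg at hcase
      have hud2 : u + d - P < P := by linarith
      have hy : rmod P y = u + d - P := by
        apply rmod_unique hP _ _ (⌊x/P⌋ + 1) (by linarith) hud2
        push_cast
        simp only [hd]; linarith [hx]
      rw [wave, wave, hy, ← hu]
      have hPprof : profile h P P = profile h P 0 := by
        rw [profile_zero hh hP4 hP, profile_P hh hP4 hP]
      have l1 := profile_lip (h := h) (P := P) u P
      have l2 := profile_lip (h := h) (P := P) 0 (u + d - P)
      have e1 : |u - P| = P - u := by rw [abs_of_nonpos (by linarith)]; ring
      have e2 : |(0:ℝ) - (u + d - P)| = u + d - P := by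
        rw [abs_of_nonpos (by linarith)]; ring
      rw [e1] at l1; rw [e2] at l2
      calc |profile h P u - profile h P (u + d - P)|
          ≤ |profile h P u - profile h P P| + |profile h P P - profile h P (u + d - P)| :=
            abs_sub_le _ _ _
        _ = |profile h P u - profile h P P| + |profile h P 0 - profile h P (u + d - P)| := by
            rw [hPprof]
        _ ≤ (P - u) + (u + d - P) := add_le_add l1 l2
        _ = d := by ring

lemma profile_flip {h P : ℝ} (hh : 0 ≤ h) (hP4 : 4*h ≤ P) (hP : 0 < P) (y : ℝ)
    (h0 : 0 ≤ y) (h1 : y ≤ P/2) : profile h P (y + P/2) = - profile h P y := by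
  unfold profile
  rw [show y + P/2 - P/2 = y by ring, abs_of_nonneg h0,
    abs_of_nonpos (by linarith : y - P/2 ≤ 0)]
  rw [show P/4 - -(y - P/2) = y - P/4 by ring, show P/4 - y = -(y - P/4) by ring]
  exact clamp_neg hh _

lemma wave_antiperiod {h P : ℝ} (hh : 0 ≤ h) (hP4 : 4*h ≤ P) (hP : 0 < P) (x : ℝ) :
    wave h P (x + P/2) = - wave h P x := by
  set u := rmod P x with hu
  have hu0 : 0 ≤ u := rmod_nonneg hP x
  have huP : u < P := rmod_lt hP x
  have hx : x = u + P * ⌊x/P⌋ := rmod_decomp P x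
  by_cases hcase : u < P/2
  · have hy : rmod P (x + P/2) = u + P/2 := by
      apply rmod_unique hP _ _ ⌊x/P⌋ (by linarith) (by linarith)
      linarith [hx]
    rw [wave, wave, hy, ← hu]
    exact profile_flip hh hP4 hP u hu0 (by linarith)
  · push_neg at hcase
    have hy : rmod P (x + P/2) = u - P/2 := by
      apply rmod_unique hP _ _ (⌊x/P⌋ + 1) (by linarith) (by linarith)
      push_cast
      linarith [hx]
    rw [wave, wave, hy, ← hu]
    have := profile_flip hh hP4 hP (u - P/2) (by linarith) (by linarith)
    rw [show u - P/2 + P/2 = u by ring] at this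
    linarith [this]

lemma cover (σ : ℝ) (hσ : 0 < σ) (K : ℕ) (hK : 1 ≤ K) (x : ℝ) :
    ∃ j : ℕ, j < K ∧ rmod ((K:ℝ)*σ) (x + j*σ) ∈ Set.Icc (0:ℝ) σ := by
  set Q := (K:ℝ)*σ with hQdef
  have hK0 : (0:ℝ) < K := by exact_mod_cast hK
  have hK1 : (1:ℝ) ≤ K := by exact_mod_cast hK
  have hQ0 : 0 < Q := mul_pos hK0 hσ
  have hσQ : σ ≤ Q := by
    rw [hQdef]; nlinarith
  set r := rmod Q x with hr
  have hr0 : 0 ≤ r := rmod_nonneg hQ0 x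
  have hrQ : r < Q := rmod_lt hQ0 x
  have hx : x = r + Q * ⌊x/Q⌋ := rmod_decomp Q x
  by_cases hcase : r ≤ σ
  · refine ⟨0, hK, ?_⟩
    simp only [Nat.cast_zero, zero_mul, add_zero]
    rw [← hr]
    exact ⟨hr0, hcase⟩
  · push_neg at hcase
    set jz : ℤ := ⌈(Q - r)/σ⌉ with hjz
    have hjz1 : (1:ℤ) ≤ jz := by
      have hpos : 0 < (Q - r)/σ := div_pos (by linarith) hσ
      have := Int.ceil_pos.mpr hpos
      omega
    have hjzlt : (jz:ℝ) * σ < Q - r + σ := by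
      have h2 : (jz:ℝ) < (Q - r)/σ + 1 := Int.ceil_lt_add_one _
      have h3 : (jz:ℝ)*σ < ((Q-r)/σ + 1)*σ := by
        exact mul_lt_mul_of_pos_right h2 hσ
      have h4 : ((Q-r)/σ + 1)*σ = Q - r + σ := by field_simp
      linarith
    have hjzge : Q - r ≤ (jz:ℝ) * σ := by
      have h2 : (Q - r)/σ ≤ (jz:ℝ) := Int.le_ceil _
      have h3 : ((Q-r)/σ)*σ ≤ (jz:ℝ)*σ := mul_le_mul_of_nonneg_right h2 hσ.le
      have h4 : ((Q-r)/σ)*σ = Q - r := by field_simp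
      linarith
    have hjzK : jz ≤ (K:ℤ) - 1 := by
      apply Int.ceil_le.mpr
      push_cast
      rw [div_le_iff₀ hσ]
      have : ((K:ℝ) - 1)*σ = Q - σ := by rw [hQdef]; ring
      linarith
    set j := jz.toNat with hj
    have hjcastz : (j:ℤ) = jz := Int.toNat_of_nonneg (by omega)
    have hjcast : (j:ℝ) = (jz:ℝ) := by exact_mod_cast hjcastz
    refine ⟨j, ?_, ?_⟩
    · have : (j:ℤ) < (K:ℤ) := by omega
      exact_mod_cast this
    · have hval : rmod Q (x + j*σ) = r + (j:ℝ)*σ - Q := by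
        apply rmod_unique hQ0 _ _ (⌊x/Q⌋ + 1)
        · rw [hjcast]; linarith
        · rw [hjcast]; linarith
        · push_cast
          linarith [hx]
      rw [hval, hjcast]
      constructor
      · linarith
      · linarith
lemma wave_near (h σ : ℝ) (K : ℕ) (hh : 0 < h) (hσ : 0 < σ) (hσ2 : σ ≤ 2*h)
    (hQ : (K:ℝ) * σ = 4*h) (a d : ℝ) (hd0 : 0 ≤ d) (hd : d ≤ 2*h - σ) :
    ∃ j : ℕ, j < K ∧ |wave h (8*h) (a + j*σ) - wave h (8*h) ((a + d) + j*σ)| = d := by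
  have hK1 : 1 ≤ K := by
    by_contra hcon
    have : K = 0 := by omega
    rw [this] at hQ
    simp at hQ
    nlinarith
  obtain ⟨j, hj, hw⟩ := cover σ hσ K hK1 (a - h)
  rw [hQ] at hw
  set w := rmod (4*h) (a - h + j*σ) with hwdef
  have hw0 : 0 ≤ w := hw.1
  have hwσ : w ≤ σ := hw.2
  have hdec : a - h + j*σ = w + (4*h) * ⌊(a - h + j*σ)/(4*h)⌋ := rmod_decomp _ _
  set kk := ⌊(a - h + j*σ)/(4*h)⌋ with hkk
  have h8 : (0:ℝ) < 8*h := by linarith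
  have hP4 : 4*h ≤ 8*h := by linarith
  rcases Int.even_or_odd kk with ⟨q, hq⟩ | ⟨q, hq⟩
  · -- even : positions on the rise [h, 3h]
    have hpa : rmod (8*h) (a + j*σ) = w + h := by
      apply rmod_unique h8 _ _ q (by linarith) (by linarith)
      have : (kk:ℝ) = (q:ℝ) + (q:ℝ) := by exact_mod_cast hq
      nlinarith [hdec, this]
    have hpb : rmod (8*h) ((a + d) + j*σ) = w + h + d := by
      apply rmod_unique h8 _ _ q (by linarith) (by linarith)
      have : (kk:ℝ) = (q:ℝ) + (q:ℝ) := by exact_mod_cast hq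
      nlinarith [hdec, this]
    refine ⟨j, hj, ?_⟩
    rw [wave, wave, hpa, hpb]
    rw [profile_rise hh.le hP4 (by linarith) (by linarith),
      profile_rise hh.le hP4 (by linarith) (by linarith)]
    rw [show w + h - 8*h/4 - (w + h + d - 8*h/4) = -d by ring, abs_neg, abs_of_nonneg hd0]
  · -- odd : positions on the fall [5h, 7h]
    have hpa : rmod (8*h) (a + j*σ) = w + 5*h := by
      apply rmod_unique h8 _ _ q (by linarith) (by linarith)
      have : (kk:ℝ) = 2*(q:ℝ) + 1 := by exact_mod_cast hq
      nlinarith [hdec, this]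
    have hpb : rmod (8*h) ((a + d) + j*σ) = w + 5*h + d := by
      apply rmod_unique h8 _ _ q (by linarith) (by linarith)
      have : (kk:ℝ) = 2*(q:ℝ) + 1 := by exact_mod_cast hq
      nlinarith [hdec, this]
    refine ⟨j, hj, ?_⟩
    rw [wave, wave, hpa, hpb]
    rw [profile_fall hh.le hP4 (by linarith) (by linarith),
      profile_fall hh.le hP4 (by linarith) (by linarith)]
    rw [show 3*(8*h)/4 - (w + 5*h) - (3*(8*h)/4 - (w + 5*h + d)) = d by ring, abs_of_nonneg hd0]

lemma wave_sep (h c P σ : ℝ) (K : ℕ) (hh : 0 < h) (hc0 : 0 ≤ c) (hc2 : c ≤ 2*h)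
    (hP : 8*h ≤ P) (hσ0 : 0 < σ) (hσ : σ ≤ P/4 - h) (hQ : (K:ℝ) * σ = P/2)
    (x y : ℝ) (hd1 : 2*h - c + σ ≤ rmod P (y - x)) (hd2 : rmod P (y - x) ≤ 3*P/4 - h + c - σ) :
    ∃ j : ℕ, j < K ∧ 2*h - c ≤ |wave h P (x + j*σ) - wave h P (y + j*σ)| := by
  have hP0 : (0:ℝ) < P := by linarith
  have hP4 : 4*h ≤ P := by linarith
  set d := rmod P (y - x) with hddef
  have hdec : y - x = d + P * ⌊(y - x)/P⌋ := rmod_decomp _ _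
  set md := ⌊(y - x)/P⌋ with hmd
  set u : ℝ := if P/4 + h - c ≤ d then 0 else P/4 + h - c - d with hudef
  have hu0 : 0 ≤ u := by
    rw [hudef]; split_ifs with hif
    · exact le_refl 0
    · linarith
  have hu1 : u ≤ P/4 - h - σ := by
    rw [hudef]; split_ifs with hif
    · linarith
    · linarith
  have hud1 : P/4 + h - c ≤ u + d := by
    rw [hudef]; split_ifs with hif
    · linarith
    · linarith
  have hud2 : u + d ≤ 3*P/4 - h + c - σ := by
    rw [hudef]; split_ifs with hif
    · linarith
    · linarith
  have hK1 : 1 ≤ K := by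
    by_contra hcon
    have hk0 : K = 0 := by omega
    rw [hk0] at hQ
    simp at hQ
    nlinarith
  obtain ⟨j, hj, hw⟩ := cover σ hσ0 K hK1 (x - u)
  rw [hQ] at hw
  set w := rmod (P/2) (x - u + j*σ) with hwdef
  have hw0 : 0 ≤ w := hw.1
  have hwσ : w ≤ σ := hw.2
  have hdec2 : x - u + j*σ = w + (P/2) * ⌊(x - u + j*σ)/(P/2)⌋ := rmod_decomp _ _
  set kk := ⌊(x - u + j*σ)/(P/2)⌋ with hkk
  set A := w + u with hA
  have hA0 : 0 ≤ A := by rw [hA]; linarith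
  have hA2 : A ≤ P/4 - h := by rw [hA]; linarith
  set B := A + d with hB
  have hB1 : P/4 + h - c ≤ B := by rw [hB, hA]; linarith
  have hB2 : B ≤ 3*P/4 - h + c := by rw [hB, hA]; linarith
  have hB0 : 0 ≤ B := by linarith
  have hBP : B < P := by linarith
  refine ⟨j, hj, ?_⟩
  rcases Int.even_or_odd kk with ⟨q, hq⟩ | ⟨q, hq⟩
  · -- even case : x+jσ at position A (bottom plateau), y+jσ at position B
    have hqc : (kk:ℝ) = (q:ℝ) + (q:ℝ) := by exact_mod_cast hq
    have hpx : rmod P (x + j*σ) = A := by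
      apply rmod_unique hP0 _ _ q hA0 (by linarith)
      rw [hA]; linear_combination hdec2 + (P/2) * hqc
    have hpy : rmod P (y + j*σ) = B := by
      apply rmod_unique hP0 _ _ (q + md) hB0 hBP
      push_cast
      rw [hB, hA]; linear_combination hdec2 + (P/2) * hqc + hdec
    rw [wave, wave, hpx, hpy]
    rw [profile_bot hh.le hP4 hA0 hA2]
    have hmid : h - c ≤ profile h P B := profile_mid hc0 hB1 hB2
    have habs : |(-h) - profile h P B| = profile h P B + h := by
      rw [abs_of_nonpos (by linarith)]; ring
    rw [habs]; linarith
  · -- odd case : use antiperiodicity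
    have hqc : (kk:ℝ) = 2*(q:ℝ) + 1 := by exact_mod_cast hq
    have hpx : rmod P (x + j*σ - P/2) = A := by
      apply rmod_unique hP0 _ _ q hA0 (by linarith)
      rw [hA]; linear_combination hdec2 + (P/2) * hqc
    have hpy : rmod P (y + j*σ - P/2) = B := by
      apply rmod_unique hP0 _ _ (q + md) hB0 hBP
      push_cast
      rw [hB, hA]; linear_combination hdec2 + (P/2) * hqc + hdec
    have hwx : wave h P (x + j*σ) = - wave h P (x + j*σ - P/2) := by
      have := wave_antiperiod hh.le hP4 hP0 (x + j*σ - P/2)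
      rw [show x + j*σ - P/2 + P/2 = x + j*σ by ring] at this
      exact this
    have hwy : wave h P (y + j*σ) = - wave h P (y + j*σ - P/2) := by
      have := wave_antiperiod hh.le hP4 hP0 (y + j*σ - P/2)
      rw [show y + j*σ - P/2 + P/2 = y + j*σ by ring] at this
      exact this
    rw [hwx, hwy, wave, wave, hpx, hpy]
    rw [profile_bot hh.le hP4 hA0 hA2]
    have hmid : h - c ≤ profile h P B := profile_mid hc0 hB1 hB2
    have habs : |(-(-h)) - -(profile h P B)| = h + profile h P B := by
      rw [abs_of_nonneg (by linarith)]; ring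
    rw [habs]; linarith
/-- There is a map `g : [0, αn] → [-(0.5+ε)α, (0.5+ε)α]^D` with
`D ≤ 4⌈1/ε⌉⌈log₂ n⌉` positive, such that `min |a-b| α = min ‖g a - g b‖_∞ α` for all
`a, b ∈ [0, αn]`.  (Here `‖·‖` on `Fin D → ℝ` is the sup norm.) -/
theorem stmt_4 (ε α : ℝ) (hε : ε ∈ Set.Ioo (0 : ℝ) (1 / 2)) (hα : 1 < α)
    (n : ℕ) (hn : 2 ≤ n) :
    ∃ D : ℕ, 0 < D ∧ D ≤ 4 * ⌈1 / ε⌉₊ * ⌈Real.logb 2 n⌉₊ ∧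
      ∃ g : ℝ → Fin D → ℝ,
        (∀ a ∈ Set.Icc (0 : ℝ) (α * n),
          ∀ i, g a i ∈ Set.Icc (-((0.5 + ε) * α)) ((0.5 + ε) * α)) ∧
        (∀ a ∈ Set.Icc (0 : ℝ) (α * n), ∀ b ∈ Set.Icc (0 : ℝ) (α * n),
          min |a - b| α = min ‖g a - g b‖ α) := by
  obtain ⟨hε0, hεhalf⟩ := hε
  have hα0 : 0 < α := by linarith
  set k := ⌈1 / ε⌉₊ with hkdef
  set m := ⌈Real.logb 2 (n:ℝ)⌉₊ with hmdef
  set h := (0.5 + ε) * α with hhdef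
  have hh0 : 0 < h := by rw [hhdef]; nlinarith
  set E := ε * α with hEdef
  have hE0 : 0 < E := mul_pos hε0 hα0
  set c := 2 * E with hcdef
  have h2hc : 2*h - c = α := by rw [hhdef, hcdef, hEdef]; ring
  have hEh : E ≤ h := by rw [hEdef, hhdef]; nlinarith
  have hc0 : 0 ≤ c := by rw [hcdef]; linarith
  have hch : c ≤ 2*h := by rw [hcdef]; linarith
  set K₀ := ⌈4*h/E⌉₊ with hK0def
  have hK01 : 1 ≤ K₀ := Nat.one_le_ceil_iff.mpr (div_pos (by linarith) hE0)
  have hK0R : (0:ℝ) < K₀ := by exact_mod_cast hK01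
  set σ₀ := 4*h/(K₀:ℝ) with hs0def
  have hσ₀0 : 0 < σ₀ := by rw [hs0def]; positivity
  have hσ₀Q : (K₀:ℝ) * σ₀ = 4*h := by
    rw [hs0def]; field_simp
  have hσ₀E : σ₀ ≤ E := by
    rw [hs0def, div_le_iff₀ hK0R]
    have h1 : 4*h/E ≤ (K₀:ℝ) := Nat.le_ceil _
    rw [div_le_iff₀ hE0] at h1
    linarith [mul_comm E (K₀:ℝ)]
  have hσ₀h : σ₀ ≤ h := hσ₀E.trans hEh
  have hσc : 2*σ₀ ≤ c := by rw [hcdef]; linarith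
  have hα2h : α ≤ 2*h := by linarith
  -- facts about m and n
  have hn1 : (1:ℝ) < n := by exact_mod_cast Nat.lt_of_lt_of_le one_lt_two hn
  have hm1 : 1 ≤ m := by
    rw [hmdef]
    exact Nat.one_le_ceil_iff.mpr (Real.logb_pos one_lt_two hn1)
  have hn2m : n ≤ 2^m := by
    have h1 : Real.logb 2 (n:ℝ) ≤ (m:ℝ) := Nat.le_ceil _
    have h2 : (n:ℝ) = (2:ℝ) ^ (Real.logb 2 (n:ℝ)) :=
      (Real.rpow_logb (by norm_num) (by norm_num) (by linarith)).symm
    have h3 : (n:ℝ) ≤ (2:ℝ) ^ ((m:ℕ):ℝ) := by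
      rw [h2]
      exact Real.rpow_le_rpow_of_exponent_le (by norm_num) h1
    rw [Real.rpow_natCast] at h3
    exact_mod_cast h3
  have hk1ε : 1/ε ≤ (k:ℝ) := Nat.le_ceil _
  have hk3 : 3 ≤ k := by
    have h1 : (2:ℝ) < 1/ε := by rw [lt_div_iff₀ hε0]; linarith
    have h2 : (2:ℝ) < (k:ℝ) := lt_of_lt_of_le h1 hk1ε
    exact_mod_cast Nat.succ_le_of_lt (by exact_mod_cast h2)
  have hkε : 1 ≤ (k:ℝ) * ε := (div_le_iff₀ hε0).mp hk1ε
  have hK0le : K₀ ≤ 2*k + 4 := by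
    rw [hK0def]
    apply Nat.ceil_le.mpr
    push_cast
    rw [div_le_iff₀ hE0, hhdef, hEdef]
    nlinarith [mul_le_mul_of_nonneg_right hkε hα0.le]
  set D := K₀ + (m - 1) * 8 with hDdef
  have hD0 : 0 < D := by omega
  have hDle : D ≤ 4 * k * m := by
    obtain ⟨m', hm'⟩ : ∃ m', m = m' + 1 := ⟨m - 1, by omega⟩
    rw [hDdef, hm']
    have hmm : (m' + 1) - 1 = m' := by omega
    rw [hmm]
    calc K₀ + m' * 8 ≤ (2*k + 4) + m' * 8 := Nat.add_le_add_right hK0le _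
      _ ≤ 4*k + (4*k) * m' := Nat.add_le_add (by omega) (by
          calc m' * 8 ≤ m' * (4*k) := Nat.mul_le_mul_left _ (by omega)
            _ = (4*k) * m' := Nat.mul_comm _ _)
      _ = 4 * k * (m' + 1) := by ring
  -- the periods
  set P : ℕ → ℝ := fun s => 2^(s+4) * h with hPdef
  have hPfact : ∀ s : ℕ, 0 < P s ∧ 16*h ≤ P s := by
    intro s
    have h16 : (16:ℝ) ≤ 2^(s+4) := by
      calc (16:ℝ) = 2^4 := by norm_num
        _ ≤ 2^(s+4) := by
          apply pow_le_pow_right₀ (by norm_num) (by omega)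
    have hps : (0:ℝ) < 2^(s+4) := by positivity
    constructor
    · simp only [hPdef]; exact mul_pos hps hh0
    · simp only [hPdef]; nlinarith
  classical
  set gg : ℝ → (Fin K₀ ⊕ (Fin (m-1) × Fin 8)) → ℝ := fun x i =>
    Sum.elim (fun j : Fin K₀ => wave h (8*h) (x + (j:ℕ)*σ₀))
      (fun tj : Fin (m-1) × Fin 8 =>
        wave h (P (tj.1:ℕ)) (x + (tj.2:ℕ) * (P (tj.1:ℕ)/16))) i
    with hggdef
  have hcard : Fintype.card (Fin K₀ ⊕ (Fin (m-1) × Fin 8)) = D := by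
    simp [hDdef]
  set e := (Fintype.equivFinOfCardEq hcard).symm with hedef
  have hlip : ∀ (i : Fin K₀ ⊕ (Fin (m-1) × Fin 8)) (x y : ℝ),
      |gg x i - gg y i| ≤ |x - y| := by
    intro i x y
    rcases i with j | tj
    · simp only [hggdef, Sum.elim_inl]
      have := wave_lip (h := h) (P := 8*h) hh0.le (by linarith) (by linarith)
        (x + (j:ℕ)*σ₀) (y + (j:ℕ)*σ₀)
      simpa using this
    · obtain ⟨hp0, hp16⟩ := hPfact (tj.1:ℕ)
      simp only [hggdef, Sum.elim_inr]
      have := wave_lip (h := h) (P := P (tj.1:ℕ)) hh0.le (by linarith) hp0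
        (x + (tj.2:ℕ)*(P (tj.1:ℕ)/16)) (y + (tj.2:ℕ)*(P (tj.1:ℕ)/16))
      simpa using this
  have hrange : ∀ (x : ℝ) (i : Fin K₀ ⊕ (Fin (m-1) × Fin 8)), |gg x i| ≤ h := by
    intro x i
    rcases i with j | tj
    · simp only [hggdef, Sum.elim_inl]; exact wave_abs_le hh0.le _
    · simp only [hggdef, Sum.elim_inr]; exact wave_abs_le hh0.le _
  have hnear : ∀ a b : ℝ, a ≤ b → b - a ≤ 2*h - σ₀ →
      ∃ i, |gg a i - gg b i| = b - a := by
    intro a b hab hd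
    obtain ⟨j, hj, hw⟩ := wave_near h σ₀ K₀ hh0 hσ₀0 (by linarith) hσ₀Q a (b - a)
      (by linarith) hd
    refine ⟨Sum.inl ⟨j, hj⟩, ?_⟩
    simp only [hggdef, Sum.elim_inl]
    rw [show a + (b - a) = b by ring] at hw
    simpa using hw
  have hfar : ∀ a b : ℝ, a ≤ b → α ≤ b - a → b - a ≤ α * n →
      ∃ i, α ≤ |gg a i - gg b i| := by
    intro a b hab hαd hdn
    set d := b - a with hddef
    by_cases hsmall : d ≤ 2*h - σ₀
    · obtain ⟨i, hi⟩ := hnear a b hab hsmall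
      exact ⟨i, by rw [hi]; exact hαd⟩
    · push_neg at hsmall
      have h8 : (0:ℝ) < 8*h := by linarith
      obtain ⟨d₀, hd0⟩ : ∃ t : ℝ, rmod (8*h) d = t := ⟨_, rfl⟩
      have hd₀0 : 0 ≤ d₀ := hd0 ▸ rmod_nonneg h8 d
      have hd₀8 : d₀ < 8*h := hd0 ▸ rmod_lt h8 d
      have hA₀small : 2*h - c + σ₀ ≤ 2*h - σ₀ := by linarith
      by_cases hc1 : 2*h - c + σ₀ ≤ d₀ ∧ d₀ ≤ 5*h
      · obtain ⟨j, hj, hsep⟩ := wave_sep h c (8*h) σ₀ K₀ hh0 hc0 hch le_rfl hσ₀0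
          (by linarith) (by rw [hσ₀Q]; ring) a b
          (by rw [← hddef, hd0]; linarith [hc1.1])
          (by rw [← hddef, hd0]; linarith [hc1.2])
        refine ⟨Sum.inl ⟨j, hj⟩, ?_⟩
        rw [h2hc] at hsep
        simp only [hggdef, Sum.elim_inl]
        simpa using hsep
      · by_cases hc2 : 5*h < d₀ ∧ d₀ ≤ 6*h + c - σ₀
        · have hd₀pos : 0 < d₀ := by linarith [hc2.1]
          have hneg : rmod (8*h) (a - b) = 8*h - d₀ := by
            have h1 : a - b = -d := by rw [hddef]; ring
            rw [h1, rmod_neg h8 (by rw [hd0]; exact hd₀pos), hd0]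
          obtain ⟨j, hj, hsep⟩ := wave_sep h c (8*h) σ₀ K₀ hh0 hc0 hch le_rfl hσ₀0
            (by linarith) (by rw [hσ₀Q]; ring) b a
            (by rw [hneg]; linarith [hc2.2])
            (by rw [hneg]; linarith [hc2.1])
          refine ⟨Sum.inl ⟨j, hj⟩, ?_⟩
          rw [h2hc] at hsep
          simp only [hggdef, Sum.elim_inl]
          rw [abs_sub_comm]
          simpa using hsep
        · have hgap : d₀ < 2*h - c + σ₀ ∨ 6*h + c - σ₀ < d₀ := by
            rcases le_or_gt d₀ (5*h) with hle | hlt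
            · left
              by_contra hcon
              push_neg at hcon
              exact hc1 ⟨hcon, hle⟩
            · right
              by_contra hcon
              push_neg at hcon
              exact hc2 ⟨hlt, hcon⟩
          have hdpos : 0 < d := by linarith
          have hflnn : 0 ≤ ⌊d/(8*h)⌋ := Int.floor_nonneg.mpr (div_nonneg hdpos.le h8.le)
          have hdecd : d = d₀ + 8*h*⌊d/(8*h)⌋ := by
            have := rmod_decomp (8*h) d
            rw [hd0] at this
            exact this
          obtain ⟨v, e', hv1, hveq, he'⟩ :
              ∃ (v : ℕ) (e' : ℝ), 1 ≤ v ∧ d = 8*h*v + e' ∧ |e'| < 2*h - c + σ₀ := by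
            have hcast : ((⌊d/(8*h)⌋).toNat : ℝ) = ((⌊d/(8*h)⌋ : ℤ) : ℝ) := by
              exact_mod_cast Int.toNat_of_nonneg hflnn
            rcases hgap with hlt | hgt
            · refine ⟨(⌊d/(8*h)⌋).toNat, d₀, ?_, ?_, ?_⟩
              · by_contra hcon
                push_neg at hcon
                have h00 : ⌊d/(8*h)⌋ = 0 := by omega
                rw [h00] at hdecd
                simp at hdecd
                linarith
              · rw [hcast]; linarith [hdecd]
              · rw [abs_of_nonneg hd₀0]; exact hlt
            · refine ⟨(⌊d/(8*h)⌋).toNat + 1, d₀ - 8*h, ?_, ?_, ?_⟩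
              · omega
              · push_cast
                rw [hcast]
                linarith [hdecd]
              · rw [abs_of_nonpos (by linarith)]; linarith
          have hvn : 4 * v ≤ n := by
            have habs := abs_lt.mp he'
            have h1 : 8*h*(v:ℝ) < α*n + (2*h - c + σ₀) := by linarith
            have h2 : α*(n:ℝ) ≤ 2*h*(n:ℝ) :=
              mul_le_mul_of_nonneg_right hα2h (by positivity)
            have h3 : 8*h*(v:ℝ) < 2*h*(n:ℝ) + 2*h := by linarith
            have h4 : (4*(v:ℝ)) < (n:ℝ) + 1 := by nlinarith
            have h5 : (4*v : ℕ) < n + 1 := by exact_mod_cast h4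
            omega
          obtain ⟨s, w, hw2, hvw⟩ := Nat.exists_eq_pow_mul_and_not_dvd
            (Nat.one_le_iff_ne_zero.mp hv1) 2 (by norm_num)
          have hw1 : 1 ≤ w := by
            rcases Nat.eq_zero_or_pos w with h0 | h0
            · rw [h0, Nat.mul_zero] at hvw; omega
            · exact h0
          have hsm : s + 2 ≤ m := by
            have ha1 : 2^(s+2) ≤ 4*v := by
              rw [hvw]
              calc 2^(s+2) = 4 * 2^s := by ring
                _ ≤ 4 * (2^s * w) := by
                    apply Nat.mul_le_mul_left
                    exact Nat.le_mul_of_pos_right _ hw1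
            have ha2 : (2:ℕ)^(s+2) ≤ 2^m := le_trans ha1 (le_trans hvn hn2m)
            exact (Nat.pow_le_pow_iff_right (by norm_num)).mp ha2
          have hslt : s < m - 1 := by omega
          obtain ⟨r, hr⟩ : ∃ r, w = 2*r + 1 := ⟨w/2, by omega⟩
          obtain ⟨hPs0, hPs16⟩ := hPfact s
          have hPs8 : 8*h ≤ P s := by linarith
          have habse := abs_lt.mp he'
          have hrmodPs : rmod (P s) d = P s / 2 + e' := by
            apply rmod_unique hPs0 _ _ (r : ℤ)
            · linarith
            · linarith
            · have hcv : (v:ℝ) = 2^s * (2*(r:ℝ)+1) := by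
                rw [hvw, hr]; push_cast; ring
              have h8v : 8*h*(v:ℝ) = P s * r + P s/2 := by
                rw [hcv]
                simp only [hPdef]
                ring
              push_cast
              linarith
          obtain ⟨j, hj, hsep⟩ := wave_sep h c (P s) (P s/16) 8 hh0 hc0 hch hPs8
            (by linarith) (by linarith)
            (by push_cast; ring) a b
            (by rw [← hddef, hrmodPs]; linarith)
            (by rw [← hddef, hrmodPs]; linarith)
          refine ⟨Sum.inr (⟨s, hslt⟩, ⟨j, hj⟩), ?_⟩
          rw [h2hc] at hsep
          simp only [hggdef, Sum.elim_inr]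
          simpa using hsep
  refine ⟨D, hD0, hDle, fun x i => gg x (e i), ?_, ?_⟩
  · intro a _ i
    have := hrange a (e i)
    rw [Set.mem_Icc]
    exact ⟨(abs_le.mp this).1, (abs_le.mp this).2⟩
  · have hnormkey : ∀ a b : ℝ, a ∈ Set.Icc (0:ℝ) (α*n) → b ∈ Set.Icc (0:ℝ) (α*n) → a ≤ b →
        min |a - b| α = min ‖(fun i => gg a (e i)) - (fun i => gg b (e i))‖ α := by
      intro a b ha hb hab
      have habs : |a - b| = b - a := by
        rw [abs_sub_comm]; exact abs_of_nonneg (by linarith)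
      by_cases hsm : b - a ≤ 2*h - σ₀
      · have hnorm : ‖(fun i => gg a (e i)) - (fun i => gg b (e i))‖ = b - a := by
          apply le_antisymm
          · apply (pi_norm_le_iff_of_nonneg (by linarith)).mpr
            intro i
            simp only [Pi.sub_apply, Real.norm_eq_abs]
            calc |gg a (e i) - gg b (e i)| ≤ |a - b| := hlip _ a b
              _ = b - a := habs
          · obtain ⟨ii, hii⟩ := hnear a b hab hsm
            calc b - a = |gg a ii - gg b ii| := hii.symm
              _ = ‖((fun i => gg a (e i)) - (fun i => gg b (e i))) (e.symm ii)‖ := by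
                  simp [Real.norm_eq_abs]
              _ ≤ _ := norm_le_pi_norm _ _
        rw [habs, hnorm]
      · push_neg at hsm
        have hαd : α ≤ b - a := by linarith
        have hdn : b - a ≤ α * n := by
          have h1 := ha.1; have h2 := hb.2; linarith
        obtain ⟨ii, hii⟩ := hfar a b hab hαd hdn
        have hge : α ≤ ‖(fun i => gg a (e i)) - (fun i => gg b (e i))‖ := by
          calc α ≤ |gg a ii - gg b ii| := hii
            _ = ‖((fun i => gg a (e i)) - (fun i => gg b (e i))) (e.symm ii)‖ := by
                simp [Real.norm_eq_abs]
            _ ≤ _ := norm_le_pi_norm _ _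
        rw [habs, min_eq_right hαd, min_eq_right hge]
    intro a ha b hb
    rcases le_total a b with hab | hab
    · exact hnormkey a b ha hb hab
    · rw [abs_sub_comm, norm_sub_rev]
      exact hnormkey b a hb ha hab
end

section
/- Let ε ∈ (0, 1/2) and α > 1 be real numbers, and let v_1, …, v_n ∈ ℝ^d with n ≥ 2. There exist a positive integer D with D ≤ 4·d·⌈1/ε⌉·⌈log₂ n⌉ and vectors w_1, …, w_n ∈ [−(0.5+ε)α, (0.5+ε)α]^D such that for all i, j ∈ {1,…,n}: ‖w_i − w_j‖_∞ ≤ 1 if and only if ‖v_i − v_j‖_∞ ≤ 1, and ‖w_i − w_j‖_∞ ≥ α if and only if ‖v_i − v_j‖_∞ ≥ α. -/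
/-!
Work one coordinate at a time and put the `d` coordinate maps side by side. In the sup norm a map
that shrinks every distance but keeps it at least `min (distance) α` (a truncated isometry)
preserves both `≤ 1` and `≥ α` as `1 < α`, and products of such maps are again such maps.

For one coordinate, first shrink every gap between consecutive values to at most `α`, so that the
at most `n ≤ 2 ^ b` values lie in `[0, 2 ^ b α]`. Then fold this interval in half `b` times. A
pair keeps its distance up to the first level at which it straddles the fold point; there one of
`⌈1/ε⌉ + 1` clamped ramps of height `2h = (1 + 2ε)α`, shifted by multiples of `2εα`, pushes the
two values at least `min (distance) α` apart, and after the last fold every point lies on the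
linear part of a single ramp. Folds and ramps are `1`-Lipschitz and ramps take values in
`[-h, h]`.
-/

open Set MeasureTheory

section TruncatedIsometry

variable {X Y Z : Type*} [PseudoMetricSpace X] [PseudoMetricSpace Y] [PseudoMetricSpace Z]

def IsTruncatedIsometryOn (α : ℝ) (s : Set X) (f : X → Y) : Prop :=
  ∀ x ∈ s, ∀ y ∈ s, min (dist x y) α ≤ dist (f x) (f y) ∧ dist (f x) (f y) ≤ dist x y

namespace IsTruncatedIsometryOn

variable {α : ℝ} {s t : Set X} {f : X → Y}

theorem comp {t : Set Y} {g : Y → Z} (hg : IsTruncatedIsometryOn α t g)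
    (hf : IsTruncatedIsometryOn α s f) (hst : MapsTo f s t) :
    IsTruncatedIsometryOn α s (g ∘ f) := by
  intro x hx y hy
  obtain ⟨hf₁, hf₂⟩ := hf x hx y hy
  obtain ⟨hg₁, hg₂⟩ := hg (f x) (hst hx) (f y) (hst hy)
  exact ⟨(le_min hf₁ (min_le_right _ _)).trans hg₁, hg₂.trans hf₂⟩

theorem mono (hf : IsTruncatedIsometryOn α t f) (hst : s ⊆ t) : IsTruncatedIsometryOn α s f :=
  fun x hx y hy => hf x (hst hx) y (hst hy)

theorem isometry_comp {g : Y → Z} (hg : Isometry g) (hf : IsTruncatedIsometryOn α s f) :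
    IsTruncatedIsometryOn α s (g ∘ f) := by
  intro x hx y hy
  simpa only [Function.comp_apply, hg.dist_eq] using hf x hx y hy

theorem of_le {f : ℝ → Y} {s : Set ℝ}
    (hf : ∀ x ∈ s, ∀ y ∈ s, x ≤ y →
      min (y - x) α ≤ dist (f x) (f y) ∧ dist (f x) (f y) ≤ y - x) :
    IsTruncatedIsometryOn α s f := by
  intro x hx y hy
  rcases le_total x y with hxy | hyx
  · simpa [Real.dist_eq, abs_of_nonpos (sub_nonpos.2 hxy)] using hf x hx y hy hxy
  · simpa [Real.dist_eq, abs_of_nonneg (sub_nonneg.2 hyx), dist_comm] using hf y hy x hx hyx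

theorem pi {κ ι : Type*} [Fintype κ] [Fintype ι] {X : κ → Type*} [∀ k, PseudoMetricSpace (X k)]
    {s : ∀ k, Set (X k)} {f : ∀ k, X k → ι → Y} (hf : ∀ k, IsTruncatedIsometryOn α (s k) (f k)) :
    IsTruncatedIsometryOn α (univ.pi s) (fun x (q : κ × ι) => f q.1 (x q.1) q.2) := by
  intro x hx y hy
  set u : κ × ι → Y := fun q => f q.1 (x q.1) q.2
  set v : κ × ι → Y := fun q => f q.1 (y q.1) q.2
  have hcoord (k : κ) := hf k (x k) (hx k (mem_univ k)) (y k) (hy k (mem_univ k))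
  have hdist (k : κ) : dist (f k (x k)) (f k (y k)) ≤ dist u v :=
    (dist_pi_le_iff dist_nonneg).2 fun i => dist_le_pi_dist u v (k, i)
  refine ⟨?_, (dist_pi_le_iff dist_nonneg).2 fun q =>
    (dist_le_pi_dist _ _ q.2).trans ((hcoord q.1).2.trans (dist_le_pi_dist x y q.1))⟩
  by_contra! hlt
  have hxy : dist x y ≤ dist u v := by
    refine (dist_pi_le_iff dist_nonneg).2 fun k => ?_
    exact (min_le_iff.1 ((hcoord k).1.trans (hdist k))).resolve_right
      (hlt.trans_le (min_le_right _ _)).not_ge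
  exact hlt.not_ge ((min_le_left _ _).trans hxy)

theorem dist_le_iff_of_lt (hf : IsTruncatedIsometryOn α s f) {x y : X} (hx : x ∈ s) (hy : y ∈ s)
    {r : ℝ} (hr : r < α) : dist (f x) (f y) ≤ r ↔ dist x y ≤ r := by
  obtain ⟨h₁, h₂⟩ := hf x hx y hy
  refine ⟨fun h => ?_, h₂.trans⟩
  exact (min_le_iff.1 (h₁.trans h)).resolve_right hr.not_ge

theorem le_dist_iff (hf : IsTruncatedIsometryOn α s f) {x y : X} (hx : x ∈ s) (hy : y ∈ s) :
    α ≤ dist (f x) (f y) ↔ α ≤ dist x y := by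
  obtain ⟨h₁, h₂⟩ := hf x hx y hy
  exact ⟨fun h => h.trans h₂, fun h => by rwa [min_eq_right h] at h₁⟩

end IsTruncatedIsometryOn

end TruncatedIsometry

def icoUnion (s : Finset ℝ) (α : ℝ) : Set ℝ := ⋃ a ∈ s, Ico a (a + α)

/-- Grows like `x` on `icoUnion s α` and is constant elsewhere, so it shrinks every gap between
consecutive points of `s` to at most `α` and keeps shorter gaps. -/
noncomputable def gapCompression (s : Finset ℝ) (α x : ℝ) : ℝ :=
  (volume.restrict (icoUnion s α)).real (Iic x)

theorem isFiniteMeasure_restrict_icoUnion (s : Finset ℝ) (α : ℝ) :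
    IsFiniteMeasure ((volume : Measure ℝ).restrict (icoUnion s α)) :=
  isFiniteMeasure_restrict.2 <|
    (measure_biUnion_finset_le s _).trans_lt (by simp [ENNReal.mul_lt_top]) |>.ne

theorem gapCompression_mem_Icc (s : Finset ℝ) {α : ℝ} (hα : 0 ≤ α) (x : ℝ) :
    gapCompression s α x ∈ Icc 0 (s.card * α) := by
  have := isFiniteMeasure_restrict_icoUnion s α
  refine ⟨measureReal_nonneg, ?_⟩
  calc gapCompression s α x
      ≤ (volume.restrict (icoUnion s α)).real univ := measureReal_mono (subset_univ _)
    _ = volume.real (icoUnion s α) := measureReal_restrict_apply_univ _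
    _ ≤ ∑ a ∈ s, volume.real (Ico a (a + α)) := measureReal_biUnion_finset_le _ _
    _ = s.card * α := by simp [Real.volume_real_Ico_of_le (le_add_of_nonneg_right hα)]

theorem gapCompression_sub (s : Finset ℝ) (α : ℝ) {x y : ℝ} (hxy : x ≤ y) :
    gapCompression s α y - gapCompression s α x = volume.real (Ioc x y ∩ icoUnion s α) := by
  have := isFiniteMeasure_restrict_icoUnion s α
  rw [gapCompression, gapCompression, ← Iic_union_Ioc_eq_Iic hxy,
    measureReal_union (Iic_disjoint_Ioc le_rfl) measurableSet_Ioc,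
    measureReal_restrict_apply measurableSet_Ioc]
  ring

theorem isTruncatedIsometryOn_gapCompression (s : Finset ℝ) (α : ℝ) :
    IsTruncatedIsometryOn α s (gapCompression s α) := by
  refine .of_le fun x hx y _ hxy => ?_
  have hsub := gapCompression_sub s α hxy
  have hmono : volume.real (Ioc x y ∩ icoUnion s α) ≤ y - x := by
    rw [← Real.volume_real_Ioc_of_le hxy]
    exact measureReal_mono inter_subset_left measure_Ioc_lt_top.ne
  have hlow : min (y - x) α ≤ volume.real (Ioc x y ∩ icoUnion s α) := by
    rcases le_or_gt α 0 with hα | hα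
    · exact (min_le_right _ _).trans (hα.trans measureReal_nonneg)
    have hIoo : Ioo x (min y (x + α)) ⊆ Ioc x y ∩ icoUnion s α := fun z hz =>
      ⟨⟨hz.1, hz.2.le.trans (min_le_left _ _)⟩, mem_biUnion (Finset.mem_coe.1 hx)
        ⟨hz.1.le, hz.2.trans_le (min_le_right _ _)⟩⟩
    calc min (y - x) α = volume.real (Ioo x (min y (x + α))) := by
          rw [Real.volume_real_Ioo_of_le (le_min hxy (by linarith)), ← min_sub_sub_right,
            add_sub_cancel_left]
      _ ≤ _ := measureReal_mono hIoo
        (measure_ne_top_of_subset inter_subset_left measure_Ioc_lt_top.ne)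
  rw [Real.dist_eq, abs_sub_comm, hsub, abs_of_nonneg measureReal_nonneg]
  exact ⟨hlow, hmono⟩

def ramp (h t z : ℝ) : ℝ := max (-h) (min h (z - t))

theorem lipschitzWith_ramp (h t : ℝ) : LipschitzWith 1 (ramp h t) :=
  have hsub : LipschitzWith 1 fun z : ℝ => z - t :=
    LipschitzWith.of_dist_le_mul fun x y => by simp [Real.dist_eq]
  (hsub.const_min h).const_max (-h)

theorem abs_ramp_le {h : ℝ} (hh : 0 ≤ h) (t z : ℝ) : |ramp h t z| ≤ h :=
  abs_le.2 ⟨le_max_left _ _, max_le (by linarith) (min_le_left _ _)⟩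

theorem ramp_le_sub {h t z : ℝ} (hz : t - h ≤ z) : ramp h t z ≤ z - t :=
  max_le (by linarith) (min_le_right _ _)

theorem min_le_ramp (h t z : ℝ) : min h (z - t) ≤ ramp h t z := le_max_right _ _

theorem ramp_eq_sub {h t z : ℝ} (hz : z ∈ Icc (t - h) (t + h)) : ramp h t z = z - t := by
  rw [ramp, min_eq_right (by linarith [hz.2]), max_eq_right (by linarith [hz.1])]

def gridRamp (h ζ p : ℝ) (j : ℕ) : ℝ → ℝ := ramp h (p - h + 2 * ζ * j)

section GridRamp

variable {h ζ p : ℝ} {N : ℕ}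

/-- Take the ramp of the grid whose lower corner lies at most `2ζ` to the left of `x`. -/
theorem exists_min_le_gridRamp_sub (hζ : 0 < ζ) (hN : h ≤ ζ * N) {x : ℝ}
    (hx : x ∈ Icc (p - 2 * h) p) (y : ℝ) :
    ∃ j ≤ N, min (y - x) (2 * (h - ζ)) ≤ gridRamp h ζ p j y - gridRamp h ζ p j x := by
  have h2ζ : 0 < 2 * ζ := by linarith
  set j := ⌊(x - p + 2 * h) / (2 * ζ)⌋₊
  have hj₁ : 2 * ζ * j ≤ x - p + 2 * h :=
    (le_div_iff₀' h2ζ).1 (Nat.floor_le (div_nonneg (by linarith [hx.1]) h2ζ.le))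
  have hj₂ : x - p + 2 * h < 2 * ζ * j + 2 * ζ := by
    have := (div_lt_iff₀' h2ζ).1 (Nat.lt_floor_add_one ((x - p + 2 * h) / (2 * ζ)))
    linarith
  refine ⟨j, Nat.floor_le_of_le ?_, ?_⟩
  · rw [div_le_iff₀' h2ζ]; nlinarith [hx.2]
  set t := p - h + 2 * ζ * j
  have hx' : ramp h t x ≤ x - t := ramp_le_sub (by linarith)
  have hy' := min_le_ramp h t y
  calc min (y - x) (2 * (h - ζ))
      ≤ min (h - (x - t)) (y - t - (x - t)) :=
        le_min ((min_le_right _ _).trans (by linarith)) ((min_le_left _ _).trans (by linarith))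
    _ = min h (y - t) - (x - t) := min_sub_sub_right _ _ _
    _ ≤ gridRamp h ζ p j y - gridRamp h ζ p j x := by simp only [gridRamp]; linarith

/-- If `u < p - 2h`, the ramp centred at `p - h` already sends `u` to `-h` and `v` to `h`. -/
theorem exists_min_le_abs_gridRamp_sub (hζ : 0 < ζ) (hN : h ≤ ζ * N) {u v : ℝ}
    (hp : p ∈ uIcc u v) :
    ∃ j ≤ N, min |u - v| (2 * (h - ζ)) ≤ |gridRamp h ζ p j u - gridRamp h ζ p j v| := by
  wlog huv : u ≤ v generalizing u v
  · simpa only [abs_sub_comm] using this (uIcc_comm u v ▸ hp) (le_of_not_ge huv)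
  rw [uIcc_of_le huv] at hp
  rw [abs_sub_comm u v, abs_of_nonneg (sub_nonneg.2 huv)]
  by_cases hu : p - 2 * h ≤ u
  · obtain ⟨j, hj, hle⟩ := exists_min_le_gridRamp_sub hζ hN ⟨hu, hp.1⟩ v
    exact ⟨j, hj, hle.trans ((le_abs_self _).trans_eq (abs_sub_comm _ _))⟩
  refine ⟨0, Nat.zero_le N, ?_⟩
  have hu' : ramp h (p - h) u ≤ -h := max_le le_rfl ((min_le_right _ _).trans (by linarith))
  have hv' : h ≤ ramp h (p - h) v :=
    (le_min le_rfl (by linarith [hp.2])).trans (min_le_ramp _ _ _)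
  have hsep : 2 * (h - ζ) ≤ ramp h (p - h) v - ramp h (p - h) u := by linarith
  simp only [gridRamp, Nat.cast_zero, mul_zero, add_zero]
  rw [abs_sub_comm]
  exact (min_le_right _ _).trans (hsep.trans (le_abs_self _))

theorem exists_forall_abs_gridRamp_sub_eq (hζ : 0 < ζ) (hN : h ≤ ζ * N) (hp : 0 ≤ p)
    (hph : p ≤ h - ζ) : ∃ j ≤ N, ∀ u ∈ Icc 0 (2 * p), ∀ v ∈ Icc 0 (2 * p),
      |gridRamp h ζ p j u - gridRamp h ζ p j v| = |u - v| := by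
  have h2ζ : 0 < 2 * ζ := by linarith
  set j := ⌊(2 * h - p) / (2 * ζ)⌋₊
  have hj₁ : 2 * ζ * j ≤ 2 * h - p :=
    (le_div_iff₀' h2ζ).1 (Nat.floor_le (div_nonneg (by linarith) h2ζ.le))
  have hj₂ : 2 * h - p < 2 * ζ * j + 2 * ζ := by
    have := (div_lt_iff₀' h2ζ).1 (Nat.lt_floor_add_one ((2 * h - p) / (2 * ζ)))
    linarith
  refine ⟨j, Nat.floor_le_of_le ((div_le_iff₀' h2ζ).2 (by linarith)), fun u hu v hv => ?_⟩
  have hIcc : Icc 0 (2 * p) ⊆ Icc (p - h + 2 * ζ * j - h) (p - h + 2 * ζ * j + h) :=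
    Icc_subset_Icc (by linarith) (by linarith)
  simp only [gridRamp, ramp_eq_sub (hIcc hu), ramp_eq_sub (hIcc hv), sub_sub_sub_cancel_right]

end GridRamp

def foldSeq (p : ℕ → ℝ) : ℕ → ℝ → ℝ
  | 0, z => z
  | ℓ + 1, z => |foldSeq p ℓ z - p ℓ|

theorem abs_foldSeq_sub_le (p : ℕ → ℝ) (ℓ : ℕ) (x y : ℝ) :
    |foldSeq p ℓ x - foldSeq p ℓ y| ≤ |x - y| := by
  induction ℓ with
  | zero => exact le_rfl
  | succ ℓ ih =>
    refine (abs_abs_sub_abs_le_abs_sub _ _).trans ?_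
    rwa [sub_sub_sub_cancel_right]

theorem abs_abs_sub_sub_abs_sub_of_notMem_uIcc {p u v : ℝ} (hp : p ∉ uIcc u v) :
    |(|u - p| - |v - p|)| = |u - v| := by
  simp only [mem_uIcc, not_or, not_and_or, not_le] at hp
  rcases lt_or_ge p u with hu | hu
  · have hv : p < v := hp.2.resolve_right hu.not_gt
    rw [abs_of_pos (sub_pos.2 hu), abs_of_pos (sub_pos.2 hv), sub_sub_sub_cancel_right]
  · have hv : v < p := hp.1.resolve_left hu.not_gt
    rw [abs_of_nonpos (sub_nonpos.2 hu), abs_of_neg (sub_neg.2 hv), neg_sub_neg, abs_sub_comm,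
      sub_sub_sub_cancel_right]

/-- Each fold is an isometry on either side of its fold point. -/
theorem exists_abs_foldSeq_sub_eq (p : ℕ → ℝ) (x y : ℝ) (b : ℕ) :
    ∃ ℓ ≤ b, |foldSeq p ℓ x - foldSeq p ℓ y| = |x - y| ∧
      (ℓ = b ∨ p ℓ ∈ uIcc (foldSeq p ℓ x) (foldSeq p ℓ y)) := by
  induction b with
  | zero => exact ⟨0, le_rfl, rfl, .inl rfl⟩
  | succ b ih =>
    obtain ⟨ℓ, hℓ, hdist, rfl | hmem⟩ := ih
    · by_cases hmem : p ℓ ∈ uIcc (foldSeq p ℓ x) (foldSeq p ℓ y)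
      · exact ⟨ℓ, ℓ.le_succ, hdist, .inr hmem⟩
      · refine ⟨ℓ + 1, le_rfl, ?_, .inl rfl⟩
        rw [foldSeq, foldSeq, abs_abs_sub_sub_abs_sub_of_notMem_uIcc hmem, hdist]
    · exact ⟨ℓ, hℓ.trans b.le_succ, hdist, .inr hmem⟩

theorem foldSeq_mem_Icc {L z : ℝ} (hz : z ∈ Icc 0 L) (ℓ : ℕ) :
    foldSeq (fun k => L / 2 ^ (k + 1)) ℓ z ∈ Icc 0 (2 * (L / 2 ^ (ℓ + 1))) := by
  induction ℓ with
  | zero => simpa [foldSeq, mul_div_cancel₀] using hz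
  | succ ℓ ih =>
    have hhalf : 2 * (L / 2 ^ (ℓ + 1 + 1)) = L / 2 ^ (ℓ + 1) := by rw [pow_succ]; field_simp
    rw [foldSeq, hhalf]
    exact ⟨abs_nonneg _, abs_sub_le_iff.2 ⟨by linarith [ih.2], by linarith [ih.1]⟩⟩

noncomputable def foldRampEmbedding (h ζ L : ℝ) (b N : ℕ) (z : ℝ)
    (k : Fin (b + 1) × Fin (N + 1)) : ℝ :=
  gridRamp h ζ (L / 2 ^ ((k.1 : ℕ) + 1)) k.2 (foldSeq (fun ℓ => L / 2 ^ (ℓ + 1)) k.1 z)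

theorem abs_foldRampEmbedding_le {h : ℝ} (hh : 0 ≤ h) (ζ L : ℝ) (b N : ℕ) (z : ℝ)
    (k : Fin (b + 1) × Fin (N + 1)) : |foldRampEmbedding h ζ L b N z k| ≤ h :=
  abs_ramp_le hh _ _

theorem isTruncatedIsometryOn_foldRampEmbedding {h ζ L : ℝ} {b N : ℕ} (hζ : 0 < ζ)
    (hN : h ≤ ζ * N) (hL : L ≤ 2 ^ b * (2 * (h - ζ))) :
    IsTruncatedIsometryOn (2 * (h - ζ)) (Icc 0 L) (foldRampEmbedding h ζ L b N) := by
  intro x hx y hy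
  set p : ℕ → ℝ := fun ℓ => L / 2 ^ (ℓ + 1)
  refine ⟨?_, (dist_pi_le_iff dist_nonneg).2 fun k => ?_⟩
  · obtain ⟨ℓ, hℓ, hdist, hcase⟩ := exists_abs_foldSeq_sub_eq p x y b
    obtain ⟨j, hj, hsep⟩ : ∃ j ≤ N, min |x - y| (2 * (h - ζ)) ≤
        |gridRamp h ζ (p ℓ) j (foldSeq p ℓ x) - gridRamp h ζ (p ℓ) j (foldSeq p ℓ y)| := by
      rcases hcase with rfl | hmem
      · have hpℓ : 0 ≤ p ℓ := div_nonneg (hx.1.trans hx.2) (by positivity)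
        have hph : p ℓ ≤ h - ζ := by
          rw [div_le_iff₀ (by positivity), pow_succ]; linarith
        obtain ⟨j, hj, heq⟩ := exists_forall_abs_gridRamp_sub_eq hζ hN hpℓ hph
        refine ⟨j, hj, ?_⟩
        rw [heq _ (foldSeq_mem_Icc hx ℓ) _ (foldSeq_mem_Icc hy ℓ), hdist]
        exact min_le_left _ _
      · simpa only [hdist] using exists_min_le_abs_gridRamp_sub hζ hN hmem
    calc min (dist x y) (2 * (h - ζ)) ≤ _ := by rw [Real.dist_eq]; exact hsep
      _ ≤ _ := dist_le_pi_dist (foldRampEmbedding h ζ L b N x) (foldRampEmbedding h ζ L b N y)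
        (⟨ℓ, Nat.lt_succ_of_le hℓ⟩, ⟨j, Nat.lt_succ_of_le hj⟩)
  · refine ((lipschitzWith_ramp _ _).dist_le_mul _ _).trans ?_
    simpa only [NNReal.coe_one, one_mul, Real.dist_eq] using abs_foldSeq_sub_le p k.1 x y

theorem exists_isTruncatedIsometryOn_real {α ζ : ℝ} (hα : 0 < α) (hζ : 0 < ζ) {b N : ℕ}
    (hN : α / 2 + ζ ≤ ζ * N) (s : Finset ℝ) (hs : s.card ≤ 2 ^ b) :
    ∃ f : ℝ → Fin (b + 1) × Fin (N + 1) → ℝ,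
      IsTruncatedIsometryOn α s f ∧ ∀ z k, |f z k| ≤ α / 2 + ζ := by
  have hα' : 2 * (α / 2 + ζ - ζ) = α := by ring
  have hL : s.card * α ≤ 2 ^ b * (2 * (α / 2 + ζ - ζ)) := by
    rw [hα']; exact mul_le_mul_of_nonneg_right (by exact_mod_cast hs) hα.le
  have hE := isTruncatedIsometryOn_foldRampEmbedding hζ hN hL
  rw [hα'] at hE
  exact ⟨_, hE.comp (isTruncatedIsometryOn_gapCompression s α) fun z _ =>
    gapCompression_mem_Icc s hα.le z,
    fun z k => abs_foldRampEmbedding_le (by positivity) _ _ _ _ _ _⟩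

theorem exists_isTruncatedIsometryOn_pi {α ζ : ℝ} (hα : 0 < α) (hζ : 0 < ζ) {b N : ℕ}
    (hN : α / 2 + ζ ≤ ζ * N) {d : ℕ} (S : Finset (Fin d → ℝ)) (hS : S.card ≤ 2 ^ b) :
    ∃ Φ : (Fin d → ℝ) → Fin (d * ((b + 1) * (N + 1))) → ℝ,
      IsTruncatedIsometryOn α S Φ ∧ ∀ u x, |Φ u x| ≤ α / 2 + ζ := by
  choose f hf hbound using fun μ : Fin d =>
    exists_isTruncatedIsometryOn_real hα hζ hN (S.image (· μ)) (Finset.card_image_le.trans hS)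
  let e : Fin d × Fin (b + 1) × Fin (N + 1) ≃ Fin (d * ((b + 1) * (N + 1))) :=
    (Equiv.prodCongr (Equiv.refl _) finProdFinEquiv).trans finProdFinEquiv
  refine ⟨IsometryEquiv.piCongrLeft (Y := fun _ => ℝ) e ∘ fun u q => f q.1 (u q.1) q.2,
    ((IsTruncatedIsometryOn.pi hf).isometry_comp (IsometryEquiv.piCongrLeft _).isometry).mono
      fun u hu μ _ => Finset.mem_image_of_mem _ hu, fun u x => ?_⟩
  simp only [Function.comp_apply, IsometryEquiv.piCongrLeft_apply, eq_rec_constant]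
  exact hbound _ _ _

/-- Every `ℓ∞` Closest-Pair instance `v : Fin n → Fin d → ℝ` can be replaced
by an instance `w` of dimension `D ≤ 4d⌈1/ε⌉⌈log₂ n⌉` with all coordinates in
`[-(0.5+ε)α, (0.5+ε)α]`, preserving for every pair both the condition `‖·‖_∞ ≤ 1` and the
condition `‖·‖_∞ ≥ α`.  (Here `‖·‖` is the sup norm on a Pi type.) -/
theorem stmt_5 (ε α : ℝ) (hε : ε ∈ Set.Ioo (0 : ℝ) (1 / 2)) (hα : 1 < α)
    (n d : ℕ) (hn : 2 ≤ n) (hd : 0 < d)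
    (v : Fin n → Fin d → ℝ) :
    ∃ D : ℕ, 0 < D ∧ D ≤ 4 * d * ⌈1 / ε⌉₊ * ⌈Real.logb 2 n⌉₊ ∧
      ∃ w : Fin n → Fin D → ℝ,
        (∀ i x, w i x ∈ Set.Icc (-((0.5 + ε) * α)) ((0.5 + ε) * α)) ∧
        (∀ i j, (‖w i - w j‖ ≤ 1 ↔ ‖v i - v j‖ ≤ 1) ∧
          (α ≤ ‖w i - w j‖ ↔ α ≤ ‖v i - v j‖)) := by
  obtain ⟨hε₀, hε₁⟩ := hε
  have hα₀ : 0 < α := by linarith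
  rw [show ⌈Real.logb 2 n⌉₊ = Nat.clog 2 n by exact_mod_cast Real.natCeil_logb_natCast 2 n]
  set a := ⌈1 / ε⌉₊
  set b := Nat.clog 2 n
  have hb : 0 < b := Nat.clog_pos one_lt_two hn
  have ha : 0 < a := Nat.ceil_pos.2 (by positivity)
  have hεa : 1 ≤ ε * a := (div_le_iff₀' hε₀).1 (Nat.le_ceil _)
  have hS : (Finset.univ.image v).card ≤ 2 ^ b :=
    Finset.card_image_le.trans ((Finset.card_fin n).trans_le (Nat.le_pow_clog one_lt_two n))
  obtain ⟨Φ, hΦ, hbound⟩ := exists_isTruncatedIsometryOn_pi (ζ := ε * α) (N := a) hα₀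
    (by positivity) (by nlinarith) _ hS
  have hcount : (b + 1) * (a + 1) ≤ 4 * a * b := by nlinarith
  have hv (i : Fin n) : v i ∈ (Finset.univ.image v : Set (Fin d → ℝ)) := by simp
  refine ⟨d * ((b + 1) * (a + 1)), by positivity,
    (Nat.mul_le_mul_left d hcount).trans_eq (by ring), fun i => Φ (v i),
    fun i x => ?_, fun i j => ?_⟩
  · rw [show (0.5 + ε) * α = α / 2 + ε * α by ring]
    exact abs_le.1 (hbound _ _)
  · simp only [← dist_eq_norm]
    exact ⟨hΦ.dist_le_iff_of_lt (hv i) (hv j) hα, hΦ.le_dist_iff (hv i) (hv j)⟩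
end

section
/- In the graph G constructed below: if ‖v_i − v_j‖_∞ ≥ α for all i ≠ j, then rtd(u, w) ≤ 2α for every pair of vertices u, w of G; that is, the roundtrip diameter of G is at most 2α. -/
open scoped ENNReal

/-- Total weight of the walk that starts at `u` and then visits the vertices of `l` in
order.  Non-edges have weight `⊤`. -/
noncomputable def walkWeight {V : Type*} (w : V → V → ℝ≥0∞) : V → List V → ℝ≥0∞
  | _, [] => 0
  | u, x :: xs => w u x + walkWeight w x xs

/-- Shortest-path distance induced by the weight function `w` (`⊤` if there is no path). -/
noncomputable def netDist {V : Type*} (w : V → V → ℝ≥0∞) (u v : V) : ℝ≥0∞ :=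
  ⨅ (l : List V) (_ : (u :: l).getLast (List.cons_ne_nil u l) = v), walkWeight w u l

/-- Vertex set of the `ℓ∞`-CP graph: `S = Fin n`, then `X₁ = Fin d` and `X₂ = Fin d`. -/
abbrev CPVert (n d : ℕ) : Type := Fin n ⊕ (Fin d ⊕ Fin d)

/-- Edge weights of the `ℓ∞`-CP graph: `i_S → x_{X₁}` of weight `α + v i x`,
`x_{X₁} → i_S` of weight `α - v i x`, `i_S → x_{X₂}` of weight `α - v i x`,
`x_{X₂} → i_S` of weight `α + v i x`, and weight-`α` edges in both directions between any
two distinct vertices of `X₁ ∪ X₂`.  All other pairs are non-edges (weight `⊤`). -/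
noncomputable def cpWeight (n d : ℕ) (α : ℝ) (v : Fin n → Fin d → ℝ) :
    CPVert n d → CPVert n d → ℝ≥0∞
  | Sum.inl i, Sum.inr (Sum.inl x) => ENNReal.ofReal (α + v i x)
  | Sum.inr (Sum.inl x), Sum.inl i => ENNReal.ofReal (α - v i x)
  | Sum.inl i, Sum.inr (Sum.inr x) => ENNReal.ofReal (α - v i x)
  | Sum.inr (Sum.inr x), Sum.inl i => ENNReal.ofReal (α + v i x)
  | Sum.inr a, Sum.inr b => if a = b then ⊤ else ENNReal.ofReal α
  | Sum.inl _, Sum.inl _ => ⊤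


lemma netDist_le_walk {V : Type*} (w : V → V → ℝ≥0∞) {u v : V} (l : List V)
    (h : (u :: l).getLast (List.cons_ne_nil u l) = v) :
    netDist w u v ≤ walkWeight w u l :=
  iInf₂_le l h

lemma netDist_self_le {V : Type*} (w : V → V → ℝ≥0∞) (u : V) : netDist w u u ≤ 0 := by
  have := netDist_le_walk w (u := u) (v := u) ([] : List V) rfl
  simpa [walkWeight] using this

lemma netDist_le_one {V : Type*} (w : V → V → ℝ≥0∞) (u v : V) :
    netDist w u v ≤ w u v := by
  have := netDist_le_walk w (u := u) (v := v) ([v] : List V) rfl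
  simpa [walkWeight] using this

lemma netDist_le_two {V : Type*} (w : V → V → ℝ≥0∞) (u m v : V) :
    netDist w u v ≤ w u m + w m v := by
  have := netDist_le_walk w (u := u) (v := v) ([m, v] : List V) rfl
  simpa [walkWeight, add_assoc] using this

/-- If `‖v i - v j‖_∞ ≥ α` for all `i ≠ j` (the NO case), then the
roundtrip diameter of the `ℓ∞`-CP graph is at most `2α`.  (Here `‖·‖` is the sup norm on
`Fin d → ℝ`, `α ≥ 2`, `ε = 1/(4α)`, and all coordinates lie in `[-(0.5+ε)α, (0.5+ε)α]`.) -/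
theorem stmt_7 (n d : ℕ) (hn : 0 < n) (hd : 0 < d) (α : ℝ) (hα : 2 ≤ α)
    (v : Fin n → Fin d → ℝ)
    (hv : ∀ i x, |v i x| ≤ (0.5 + 1 / (4 * α)) * α)
    (hNO : ∀ i j : Fin n, i ≠ j → α ≤ ‖v i - v j‖) :
    ∀ u w : CPVert n d,
      netDist (cpWeight n d α v) u w + netDist (cpWeight n d α v) w u ≤
        ENNReal.ofReal (2 * α) := by
  intro u w
  have hα0 : (0:ℝ) < α := by linarith
  have hv' : ∀ i x, |v i x| ≤ 0.5 * α + 0.25 := by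
    intro i x
    have h := hv i x
    have he : (0.5 + 1 / (4 * α)) * α = 0.5 * α + 0.25 := by
      field_simp
      ring
    linarith [he ▸ h]
  -- basic nonnegativity facts
  have hplus : ∀ i x, (0:ℝ) ≤ α + v i x := by
    intro i x
    have := hv' i x
    have := abs_le.mp this
    linarith [this.1, this.2]
  have hminus : ∀ i x, (0:ℝ) ≤ α - v i x := by
    intro i x
    have := abs_le.mp (hv' i x)
    linarith [this.1, this.2]
  set W := cpWeight n d α v with hW
  -- the S–X roundtrip bound
  have hSX : ∀ (i : Fin n) (y : Fin d ⊕ Fin d),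
      netDist W (Sum.inl i) (Sum.inr y) + netDist W (Sum.inr y) (Sum.inl i) ≤
        ENNReal.ofReal (2 * α) := by
    intro i y
    rcases y with x | x
    · have h1 := netDist_le_one W (Sum.inl i : CPVert n d) (Sum.inr (Sum.inl x))
      have h2 := netDist_le_one W (Sum.inr (Sum.inl x) : CPVert n d) (Sum.inl i)
      calc netDist W (Sum.inl i) (Sum.inr (Sum.inl x)) +
            netDist W (Sum.inr (Sum.inl x)) (Sum.inl i)
          ≤ ENNReal.ofReal (α + v i x) + ENNReal.ofReal (α - v i x) := by
            exact add_le_add h1 h2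
        _ ≤ ENNReal.ofReal (2 * α) := by
            rw [← ENNReal.ofReal_add (hplus i x) (hminus i x)]
            exact ENNReal.ofReal_le_ofReal (by linarith)
    · have h1 := netDist_le_one W (Sum.inl i : CPVert n d) (Sum.inr (Sum.inr x))
      have h2 := netDist_le_one W (Sum.inr (Sum.inr x) : CPVert n d) (Sum.inl i)
      calc netDist W (Sum.inl i) (Sum.inr (Sum.inr x)) +
            netDist W (Sum.inr (Sum.inr x)) (Sum.inl i)
          ≤ ENNReal.ofReal (α - v i x) + ENNReal.ofReal (α + v i x) := by
            exact add_le_add h1 h2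
        _ ≤ ENNReal.ofReal (2 * α) := by
            rw [← ENNReal.ofReal_add (hminus i x) (hplus i x)]
            exact ENNReal.ofReal_le_ofReal (by linarith)
  rcases u with i | a <;> rcases w with j | b
  · -- S–S
    by_cases hij : i = j
    · subst hij
      have := netDist_self_le W (Sum.inl i : CPVert n d)
      calc netDist W (Sum.inl i) (Sum.inl i) + netDist W (Sum.inl i) (Sum.inl i)
          ≤ 0 + 0 := add_le_add this this
        _ ≤ ENNReal.ofReal (2 * α) := by simp
    · obtain ⟨x, hx⟩ : ∃ x, α ≤ |v i x - v j x| := by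
        by_contra hcon
        push_neg at hcon
        have : ‖v i - v j‖ < α := by
          rw [pi_norm_lt_iff hα0]
          intro x
          simpa [Real.norm_eq_abs] using hcon x
        exact absurd (hNO i j hij) (not_le.mpr this)
      rcases le_abs.mp hx with hpos | hneg
      · -- v i x - v j x ≥ α : go i → X₂ → j and j → X₁ → i
        have h1 := netDist_le_two W (Sum.inl i : CPVert n d)
          (Sum.inr (Sum.inr x)) (Sum.inl j)
        have h2 := netDist_le_two W (Sum.inl j : CPVert n d)
          (Sum.inr (Sum.inl x)) (Sum.inl i)
        have e1 : W (Sum.inl i) (Sum.inr (Sum.inr x)) = ENNReal.ofReal (α - v i x) := rfl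
        have e2 : W (Sum.inr (Sum.inr x)) (Sum.inl j) = ENNReal.ofReal (α + v j x) := rfl
        have e3 : W (Sum.inl j) (Sum.inr (Sum.inl x)) = ENNReal.ofReal (α + v j x) := rfl
        have e4 : W (Sum.inr (Sum.inl x)) (Sum.inl i) = ENNReal.ofReal (α - v i x) := rfl
        rw [e1, e2] at h1
        rw [e3, e4] at h2
        calc netDist W (Sum.inl i) (Sum.inl j) + netDist W (Sum.inl j) (Sum.inl i)
            ≤ (ENNReal.ofReal (α - v i x) + ENNReal.ofReal (α + v j x)) +
              (ENNReal.ofReal (α + v j x) + ENNReal.ofReal (α - v i x)) :=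
              add_le_add h1 h2
          _ ≤ ENNReal.ofReal (2 * α) := by
              rw [← ENNReal.ofReal_add (hminus i x) (hplus j x),
                ← ENNReal.ofReal_add (hplus j x) (hminus i x),
                ← ENNReal.ofReal_add (by linarith [hminus i x, hplus j x])
                  (by linarith [hminus i x, hplus j x])]
              exact ENNReal.ofReal_le_ofReal (by linarith)
      · -- v j x - v i x ≥ α : go i → X₁ → j and j → X₂ → i
        have h1 := netDist_le_two W (Sum.inl i : CPVert n d)
          (Sum.inr (Sum.inl x)) (Sum.inl j)
        have h2 := netDist_le_two W (Sum.inl j : CPVert n d)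
          (Sum.inr (Sum.inr x)) (Sum.inl i)
        have e1 : W (Sum.inl i) (Sum.inr (Sum.inl x)) = ENNReal.ofReal (α + v i x) := rfl
        have e2 : W (Sum.inr (Sum.inl x)) (Sum.inl j) = ENNReal.ofReal (α - v j x) := rfl
        have e3 : W (Sum.inl j) (Sum.inr (Sum.inr x)) = ENNReal.ofReal (α - v j x) := rfl
        have e4 : W (Sum.inr (Sum.inr x)) (Sum.inl i) = ENNReal.ofReal (α + v i x) := rfl
        rw [e1, e2] at h1
        rw [e3, e4] at h2
        calc netDist W (Sum.inl i) (Sum.inl j) + netDist W (Sum.inl j) (Sum.inl i)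
            ≤ (ENNReal.ofReal (α + v i x) + ENNReal.ofReal (α - v j x)) +
              (ENNReal.ofReal (α - v j x) + ENNReal.ofReal (α + v i x)) :=
              add_le_add h1 h2
          _ ≤ ENNReal.ofReal (2 * α) := by
              rw [← ENNReal.ofReal_add (hplus i x) (hminus j x),
                ← ENNReal.ofReal_add (hminus j x) (hplus i x),
                ← ENNReal.ofReal_add (by linarith [hplus i x, hminus j x])
                  (by linarith [hplus i x, hminus j x])]
              exact ENNReal.ofReal_le_ofReal (by linarith)
  · exact hSX i b
  · simpa [add_comm] using hSX j a
  · -- X–X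
    by_cases hab : a = b
    · subst hab
      have := netDist_self_le W (Sum.inr a : CPVert n d)
      calc netDist W (Sum.inr a) (Sum.inr a) + netDist W (Sum.inr a) (Sum.inr a)
          ≤ 0 + 0 := add_le_add this this
        _ ≤ ENNReal.ofReal (2 * α) := by simp
    · have e : W (Sum.inr a) (Sum.inr b) = ENNReal.ofReal α := by
        simp [hW, cpWeight, hab]
      have e' : W (Sum.inr b) (Sum.inr a) = ENNReal.ofReal α := by
        simp [hW, cpWeight, Ne.symm hab]
      have h1 := netDist_le_one W (Sum.inr a : CPVert n d) (Sum.inr b)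
      have h2 := netDist_le_one W (Sum.inr b : CPVert n d) (Sum.inr a)
      rw [e] at h1; rw [e'] at h2
      calc netDist W (Sum.inr a) (Sum.inr b) + netDist W (Sum.inr b) (Sum.inr a)
          ≤ ENNReal.ofReal α + ENNReal.ofReal α := add_le_add h1 h2
        _ ≤ ENNReal.ofReal (2 * α) := by
            rw [← ENNReal.ofReal_add (by linarith) (by linarith)]
            exact ENNReal.ofReal_le_ofReal (by linarith)
end

section
/- In the graph G constructed below: if there exist i ≠ j with ‖v_i − v_j‖_∞ ≤ 1, then rtd(i_S, j_S) ≥ 4α − 2; in particular the roundtrip diameter of G is at least 4α − 2. -/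
open scoped ENNReal

/-
The only cheap way from `a_S` to `b_S` is a two-edge path through some `x_{X₁}` or `x_{X₂}`,
of weight `2α ± (v a x - v b x) ≥ 2α - 1`. Every edge weighs at least `α/2 - 1/4`, so a walk
with four or more edges weighs at least `2α - 1` as well, and a three-edge walk that does not
pass through `S` uses an `X`–`X` edge of weight `α` and weighs at least `2α - 1/2`.
Adding the two directions gives `4α - 2`.
-/

section WalkWeight

variable {V : Type*} (w : V → V → ℝ≥0∞)

lemma length_mul_le_walkWeight {c : ℝ≥0∞} (hc : ∀ u u', c ≤ w u u') :
    ∀ (u : V) (l : List V), (l.length : ℝ≥0∞) * c ≤ walkWeight w u l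
  | _, [] => by simp
  | u, x :: xs => by
    rw [List.length_cons, Nat.cast_succ, add_mul, one_mul, add_comm]
    exact add_le_add (hc u x) (length_mul_le_walkWeight hc x xs)

end WalkWeight

section CPGraph

variable {n d : ℕ} {α : ℝ} (v : Fin n → Fin d → ℝ)

lemma ofReal_le_cpWeight_inr_inr (p q : Fin d ⊕ Fin d) :
    ENNReal.ofReal α ≤ cpWeight n d α v (Sum.inr p) (Sum.inr q) := by
  simp only [cpWeight]
  split_ifs
  · exact le_top
  · exact le_rfl

lemma ofReal_le_cpWeight (hα : 0 ≤ α) (hv : ∀ i x, |v i x| ≤ α / 2 + 1 / 4)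
    (u u' : CPVert n d) : ENNReal.ofReal (α / 2 - 1 / 4) ≤ cpWeight n d α v u u' := by
  have hv' : ∀ i x, α / 2 - 1 / 4 ≤ α + v i x ∧ α / 2 - 1 / 4 ≤ α - v i x := fun i x => by
    constructor <;> linarith [abs_le.mp (hv i x)]
  rcases u with i | p <;> rcases u' with k | q
  · exact le_top
  · rcases q with x | x
    · exact ENNReal.ofReal_le_ofReal (hv' i x).1
    · exact ENNReal.ofReal_le_ofReal (hv' i x).2
  · rcases p with x | x
    · exact ENNReal.ofReal_le_ofReal (hv' k x).2
    · exact ENNReal.ofReal_le_ofReal (hv' k x).1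
  · exact (ENNReal.ofReal_le_ofReal (by linarith)).trans (ofReal_le_cpWeight_inr_inr v p q)

lemma ofReal_two_mul_sub_one_le_cpWeight_add {a b : Fin n} (hab : ∀ x, |v a x - v b x| ≤ 1)
    (p : Fin d ⊕ Fin d) :
    ENNReal.ofReal (2 * α - 1) ≤
      cpWeight n d α v (Sum.inl a) (Sum.inr p) + cpWeight n d α v (Sum.inr p) (Sum.inl b) := by
  rcases p with x | x <;> simp only [cpWeight] <;> refine le_trans ?_ ENNReal.ofReal_add_le <;>
    exact ENNReal.ofReal_le_ofReal (by linarith [abs_le.mp (hab x)])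

lemma ofReal_two_mul_sub_one_le_netDist (hα : 0 ≤ α) (hv : ∀ i x, |v i x| ≤ α / 2 + 1 / 4)
    {a b : Fin n} (hne : a ≠ b) (hab : ∀ x, |v a x - v b x| ≤ 1) :
    ENNReal.ofReal (2 * α - 1) ≤ netDist (cpWeight n d α v) (Sum.inl a) (Sum.inl b) := by
  refine le_iInf₂ fun l hl => ?_
  rcases l with _ | ⟨y, _ | ⟨z, _ | ⟨t, _ | ⟨r, rest⟩⟩⟩⟩
  · exact absurd (Sum.inl_injective hl) hne
  · obtain rfl : y = Sum.inl b := hl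
    simp [walkWeight, cpWeight]
  · obtain rfl : z = Sum.inl b := hl
    rcases y with k | p
    · simp [walkWeight, cpWeight]
    · simpa only [walkWeight, add_zero] using ofReal_two_mul_sub_one_le_cpWeight_add v hab p
  · obtain rfl : t = Sum.inl b := hl
    rcases y with k | p
    · simp [walkWeight, cpWeight]
    rcases z with k | q
    · simp [walkWeight, cpWeight]
    calc ENNReal.ofReal (2 * α - 1)
        ≤ ENNReal.ofReal (α / 2 - 1 / 4) + ENNReal.ofReal α + ENNReal.ofReal (α / 2 - 1 / 4) := by
          refine (ENNReal.ofReal_le_ofReal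
            (by linarith : 2 * α - 1 ≤ α / 2 - 1 / 4 + α + (α / 2 - 1 / 4))).trans ?_
          exact ENNReal.ofReal_add_le.trans (add_le_add_left ENNReal.ofReal_add_le _)
      _ ≤ walkWeight (cpWeight n d α v) (Sum.inl a) [Sum.inr p, Sum.inr q, Sum.inl b] := by
          simp only [walkWeight, add_zero, ← add_assoc]
          gcongr
          · exact ofReal_le_cpWeight v hα hv _ _
          · exact ofReal_le_cpWeight_inr_inr v p q
          · exact ofReal_le_cpWeight v hα hv _ _
  · calc ENNReal.ofReal (2 * α - 1) = 4 * ENNReal.ofReal (α / 2 - 1 / 4) := by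
          rw [← ENNReal.ofReal_ofNat 4, ← ENNReal.ofReal_mul (by norm_num)]
          congr 1
          ring
      _ ≤ ((y :: z :: t :: r :: rest).length : ℝ≥0∞) * ENNReal.ofReal (α / 2 - 1 / 4) := by
          gcongr; norm_cast; simp
      _ ≤ _ := length_mul_le_walkWeight _ (ofReal_le_cpWeight v hα hv) _ _

end CPGraph

theorem stmt_8_general (n d : ℕ) (α : ℝ) (hα : 2 ≤ α)
    (v : Fin n → Fin d → ℝ)
    (hv : ∀ i x, |v i x| ≤ (0.5 + 1 / (4 * α)) * α)
    (i j : Fin n) (hij : i ≠ j) (hclose : ‖v i - v j‖ ≤ 1) :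
    ENNReal.ofReal (4 * α - 2) ≤
      netDist (cpWeight n d α v) (Sum.inl i) (Sum.inl j) +
        netDist (cpWeight n d α v) (Sum.inl j) (Sum.inl i) := by
  have hα0 : 0 ≤ α := by linarith
  have hv' : ∀ k x, |v k x| ≤ α / 2 + 1 / 4 := fun k x => by
    convert hv k x using 1
    field_simp
    ring
  have hij' : ∀ x, |v i x - v j x| ≤ 1 := fun x => (norm_le_pi_norm (v i - v j) x).trans hclose
  have hji' : ∀ x, |v j x - v i x| ≤ 1 := fun x => abs_sub_comm (v j x) (v i x) ▸ hij' x
  calc ENNReal.ofReal (4 * α - 2)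
      = ENNReal.ofReal (2 * α - 1) + ENNReal.ofReal (2 * α - 1) := by
        rw [← ENNReal.ofReal_add (by linarith) (by linarith)]
        congr 1
        ring
    _ ≤ _ := add_le_add (ofReal_two_mul_sub_one_le_netDist v hα0 hv' hij hij')
        (ofReal_two_mul_sub_one_le_netDist v hα0 hv' hij.symm hji')

/-- If `‖v i - v j‖_∞ ≤ 1` for some `i ≠ j` (the YES case), then the
roundtrip distance between `i_S` and `j_S` in the `ℓ∞`-CP graph is at least `4α - 2`; in
particular the roundtrip diameter is at least `4α - 2`.  (Here `‖·‖` is the sup norm on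
`Fin d → ℝ`, `α ≥ 2`, `ε = 1/(4α)`, and all coordinates lie in `[-(0.5+ε)α, (0.5+ε)α]`.) -/
theorem stmt_8 (n d : ℕ) (hn : 0 < n) (hd : 0 < d) (α : ℝ) (hα : 2 ≤ α)
    (v : Fin n → Fin d → ℝ)
    (hv : ∀ i x, |v i x| ≤ (0.5 + 1 / (4 * α)) * α)
    (i j : Fin n) (hij : i ≠ j) (hclose : ‖v i - v j‖ ≤ 1) :
    ENNReal.ofReal (4 * α - 2) ≤
      netDist (cpWeight n d α v) (Sum.inl i) (Sum.inl j) +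
        netDist (cpWeight n d α v) (Sum.inl j) (Sum.inl i) :=
  stmt_8_general n d α hα v hv i j hij hclose
end

section
/- In the graph G′ constructed below: for any pair of distinct nodes a, b ∈ V_1, the copies a ∈ S and b′ ∈ T satisfy rtd(a, b′) ≤ 6t + 4. -/
open scoped ENNReal

/-- Vertices of the graph `G'`: `A₁` will be `V₁` (for the two copies `S` and `T`),
`A₂` will be `V₂ ∪ ⋯ ∪ V_k` (for the two copies `fwd` and `bwd`), `gj` is the bit gadget
`J = {g_1, …, g_d}`, and `o1, …, o4` are the four omni-nodes. -/
inductive GVert (A₁ A₂ : Type) (d : ℕ) : Type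
  | vS : A₁ → GVert A₁ A₂ d
  | vT : A₁ → GVert A₁ A₂ d
  | fwd : A₂ → GVert A₁ A₂ d
  | bwd : A₂ → GVert A₁ A₂ d
  | gj : Fin d → GVert A₁ A₂ d
  | o1 : GVert A₁ A₂ d
  | o2 : GVert A₁ A₂ d
  | o3 : GVert A₁ A₂ d
  | o4 : GVert A₁ A₂ d

open Classical in
/-- Edge weights of `G'` (non-edges have weight `⊤`).  Here `part : A → ZMod k` gives the
part `V_{i+1}` of each vertex `i` of `G` (so `V₁ = {a | part a = 0}`), `E` is the edge
relation of `G`, `t` is the weight scale and `ident a` is the identifier `ā ∈ {0,1}^d`. -/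
noncomputable def gw {A : Type} (k : ℕ) (part : A → ZMod k) (E : A → A → Prop)
    (d t : ℕ) (ident : A → Fin d → Bool) :
    GVert {a : A // part a = 0} {x : A // part x ≠ 0} d →
      GVert {a : A // part a = 0} {x : A // part x ≠ 0} d → ℝ≥0∞
  -- edges of G inside V₂ ∪ ⋯ ∪ V_k, copied forwards and backwards
  | .fwd x, .fwd y => if E x.1 y.1 then 1 else ⊤
  | .bwd y, .bwd x => if E x.1 y.1 then 1 else ⊤
  -- edges of G leaving V₁
  | .vS a, .fwd x => if E a.1 x.1 then ((3 * t + 1 : ℕ) : ℝ≥0∞) else ⊤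
  | .bwd x, .vS a => if E a.1 x.1 then 1 else ⊤
  -- edges of G entering V₁
  | .fwd x, .vT a => if E x.1 a.1 then ((3 * t + 1 : ℕ) : ℝ≥0∞) else ⊤
  | .vT a, .bwd x => if E x.1 a.1 then 1 else ⊤
  -- omni-nodes to/from the fwd and bwd copies
  | .o1, .fwd _ => 1
  | .fwd _, .o2 => 1
  | .o3, .bwd _ => 1
  | .bwd _, .o4 => 1
  -- S to/from omni-nodes
  | .vS _, .o1 => ((5 * t + 1 : ℕ) : ℝ≥0∞)
  | .o2, .vS _ => ((t + 1 : ℕ) : ℝ≥0∞)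
  | .vS _, .o3 => ((4 * t + 1 : ℕ) : ℝ≥0∞)
  | .o4, .vS _ => ((2 * t + 1 : ℕ) : ℝ≥0∞)
  -- T to/from omni-nodes
  | .vT _, .o1 => ((t + 1 : ℕ) : ℝ≥0∞)
  | .o2, .vT _ => ((5 * t + 1 : ℕ) : ℝ≥0∞)
  | .vT _, .o3 => ((2 * t + 1 : ℕ) : ℝ≥0∞)
  | .o4, .vT _ => ((4 * t + 1 : ℕ) : ℝ≥0∞)
  -- weight-3t edges between distinct omni-nodes
  | .o1, .o2 => ((3 * t : ℕ) : ℝ≥0∞)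
  | .o1, .o3 => ((3 * t : ℕ) : ℝ≥0∞)
  | .o1, .o4 => ((3 * t : ℕ) : ℝ≥0∞)
  | .o2, .o1 => ((3 * t : ℕ) : ℝ≥0∞)
  | .o2, .o3 => ((3 * t : ℕ) : ℝ≥0∞)
  | .o2, .o4 => ((3 * t : ℕ) : ℝ≥0∞)
  | .o3, .o1 => ((3 * t : ℕ) : ℝ≥0∞)
  | .o3, .o2 => ((3 * t : ℕ) : ℝ≥0∞)
  | .o3, .o4 => ((3 * t : ℕ) : ℝ≥0∞)
  | .o4, .o1 => ((3 * t : ℕ) : ℝ≥0∞)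
  | .o4, .o2 => ((3 * t : ℕ) : ℝ≥0∞)
  | .o4, .o3 => ((3 * t : ℕ) : ℝ≥0∞)
  -- the bit gadget: S to/from J
  | .vS a, .gj j => if ident a.1 j then ((3 * t + 1 : ℕ) : ℝ≥0∞) else ((5 * t + 1 : ℕ) : ℝ≥0∞)
  | .gj j, .vS a => if ident a.1 j then ((2 * t + 1 : ℕ) : ℝ≥0∞) else 1
  -- the bit gadget: T to/from J
  | .gj j, .vT a => if ident a.1 j then ((5 * t + 1 : ℕ) : ℝ≥0∞) else ((3 * t + 1 : ℕ) : ℝ≥0∞)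
  | .vT a, .gj j => if ident a.1 j then 1 else ((2 * t + 1 : ℕ) : ℝ≥0∞)
  -- weight-(3t+1) edges between J and the omni-nodes, in both directions
  | .gj _, .o1 => ((3 * t + 1 : ℕ) : ℝ≥0∞)
  | .gj _, .o2 => ((3 * t + 1 : ℕ) : ℝ≥0∞)
  | .gj _, .o3 => ((3 * t + 1 : ℕ) : ℝ≥0∞)
  | .gj _, .o4 => ((3 * t + 1 : ℕ) : ℝ≥0∞)
  | .o1, .gj _ => ((3 * t + 1 : ℕ) : ℝ≥0∞)
  | .o2, .gj _ => ((3 * t + 1 : ℕ) : ℝ≥0∞)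
  | .o3, .gj _ => ((3 * t + 1 : ℕ) : ℝ≥0∞)
  | .o4, .gj _ => ((3 * t + 1 : ℕ) : ℝ≥0∞)
  -- all remaining pairs: no edge
  | _, _ => ⊤

/-- `a ∈ V₁` lies on a `k`-cycle of `G`: there are `x₂ ∈ V₂, …, x_k ∈ V_k` with
`(a,x₂), (x₂,x₃), …, (x_{k-1},x_k), (x_k,a)` all edges of `G`. -/
def liesOnKCycle {A : Type} (E : A → A → Prop) (k : ℕ) (a : A) : Prop :=
  ∃ x : ℕ → A, x 0 = a ∧ (∀ i, i < k - 1 → E (x i) (x (i + 1))) ∧ E (x (k - 1)) a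


section helpers
variable {A : Type} (k : ℕ) (part : A → ZMod k) (E : A → A → Prop)
    (d t : ℕ) (ident : A → Fin d → Bool)

lemma gw_vS_gj (a : {a : A // part a = 0}) (j : Fin d) :
    gw k part E d t ident (.vS a) (.gj j) =
      if ident a.1 j then ((3 * t + 1 : ℕ) : ℝ≥0∞) else ((5 * t + 1 : ℕ) : ℝ≥0∞) := rfl

lemma gw_gj_vT (a : {a : A // part a = 0}) (j : Fin d) :
    gw k part E d t ident (.gj j) (.vT a) =
      if ident a.1 j then ((5 * t + 1 : ℕ) : ℝ≥0∞) else ((3 * t + 1 : ℕ) : ℝ≥0∞) := rfl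

lemma gw_vT_gj (a : {a : A // part a = 0}) (j : Fin d) :
    gw k part E d t ident (.vT a) (.gj j) =
      if ident a.1 j then 1 else ((2 * t + 1 : ℕ) : ℝ≥0∞) := rfl

lemma gw_gj_vS (a : {a : A // part a = 0}) (j : Fin d) :
    gw k part E d t ident (.gj j) (.vS a) =
      if ident a.1 j then ((2 * t + 1 : ℕ) : ℝ≥0∞) else 1 := rfl

end helpers

/-- For distinct `a, b ∈ V₁`, the copies `a ∈ S` and `b′ ∈ T` have
roundtrip distance at most `6t + 4` in `G′`. -/
theorem stmt_12 {A : Type} (k t : ℕ) (hk : 3 ≤ k) (ht : 2 * k < t)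
    (part : A → ZMod k) (E : A → A → Prop)
    (hE : ∀ u v : A, E u v → part v = part u + 1)
    (d : ℕ) (ident : A → Fin d → Bool)
    (hid₁ : ∀ a b : A, part a = 0 → part b = 0 → a ≠ b →
      (∃ i : Fin d, ident a i = true ∧ ident b i = false) ∧
      (∃ j : Fin d, ident a j = false ∧ ident b j = true))
    (hid₂ : ∀ a b : A, part a = 0 → part b = 0 →
      (∃ i : Fin d, ident a i = true ∧ ident b i = true) ∧
      (∃ j : Fin d, ident a j = false ∧ ident b j = false))
    (a b : A) (ha : part a = 0) (hb : part b = 0) (hab : a ≠ b) :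
    netDist (gw k part E d t ident) (GVert.vS ⟨a, ha⟩) (GVert.vT ⟨b, hb⟩) +
        netDist (gw k part E d t ident) (GVert.vT ⟨b, hb⟩) (GVert.vS ⟨a, ha⟩) ≤
      ((6 * t + 4 : ℕ) : ℝ≥0∞) := by

  obtain ⟨⟨i, hai, hbi⟩, ⟨j, haj, hbj⟩⟩ := hid₁ a b ha hb hab
  have h1 : netDist (gw k part E d t ident) (GVert.vS ⟨a, ha⟩) (GVert.vT ⟨b, hb⟩) ≤
      ((3 * t + 1 : ℕ) : ℝ≥0∞) + ((3 * t + 1 : ℕ) : ℝ≥0∞) := by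
    have h := iInf₂_le
      (f := fun (l : List (GVert {a : A // part a = 0} {x : A // part x ≠ 0} d))
        (_ : ((GVert.vS ⟨a, ha⟩ : GVert {a : A // part a = 0} {x : A // part x ≠ 0} d) :: l).getLast
          (List.cons_ne_nil _ l) = GVert.vT ⟨b, hb⟩) =>
        walkWeight (gw k part E d t ident) (GVert.vS ⟨a, ha⟩) l)
      [GVert.gj i, GVert.vT ⟨b, hb⟩] rfl
    refine le_trans h ?_
    simp [walkWeight, gw_vS_gj, gw_gj_vT, hai, hbi]
  have h2 : netDist (gw k part E d t ident) (GVert.vT ⟨b, hb⟩) (GVert.vS ⟨a, ha⟩) ≤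
      (1 : ℝ≥0∞) + 1 := by
    have h := iInf₂_le
      (f := fun (l : List (GVert {a : A // part a = 0} {x : A // part x ≠ 0} d))
        (_ : ((GVert.vT ⟨b, hb⟩ : GVert {a : A // part a = 0} {x : A // part x ≠ 0} d) :: l).getLast
          (List.cons_ne_nil _ l) = GVert.vS ⟨a, ha⟩) =>
        walkWeight (gw k part E d t ident) (GVert.vT ⟨b, hb⟩) l)
      [GVert.gj j, GVert.vS ⟨a, ha⟩] rfl
    refine le_trans h ?_
    simp [walkWeight, gw_vT_gj, gw_gj_vS, haj, hbj]
  calc netDist (gw k part E d t ident) (GVert.vS ⟨a, ha⟩) (GVert.vT ⟨b, hb⟩) +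
        netDist (gw k part E d t ident) (GVert.vT ⟨b, hb⟩) (GVert.vS ⟨a, ha⟩)
      ≤ (((3 * t + 1 : ℕ) : ℝ≥0∞) + ((3 * t + 1 : ℕ) : ℝ≥0∞)) + ((1 : ℝ≥0∞) + 1) :=
        add_le_add h1 h2
    _ = ((6 * t + 4 : ℕ) : ℝ≥0∞) := by push_cast; ring
end

section
/- In the graph G′ constructed below: for any node a ∈ V_1 with copies a ∈ S and a′ ∈ T, every directed path in G′ from a to a′ that visits at least one of the nodes o_1, o_2, o_3, o_4 has total weight at least 8t. -/
open scoped ENNReal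

/-!
Give every vertex `v` a lower bound `φ v` on its distance from `S` and a lower bound `ψ v` on
its distance to `T`, chosen so that `φ v ≤ w(u,v) + φ u` and `ψ u ≤ w(u,v) + ψ v` on every
edge (a finite check over the edge types of `G′`). Then a walk from `a ∈ S` to `a′ ∈ T`
through `x` weighs at least `φ x + ψ x`, and at each of `o₁, …, o₄` this sum is at least `8t`.
-/

section Potential

variable {V : Type*} (w : V → V → ℝ≥0∞)

theorem le_walkWeight_add_of_potential {ψ : V → ℝ≥0∞} (hψ : ∀ u v, ψ u ≤ w u v + ψ v) :
    ∀ (u : V) (l : List V), ψ u ≤ walkWeight w u l + ψ ((u :: l).getLast (List.cons_ne_nil u l))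
  | _, [] => by simp [walkWeight]
  | u, y :: ys => by
    rw [List.getLast_cons (List.cons_ne_nil y ys), walkWeight, add_assoc]
    exact (hψ u y).trans (add_le_add_right (le_walkWeight_add_of_potential hψ y ys) _)

theorem add_le_walkWeight_of_mem {φ ψ : V → ℝ≥0∞} (hφ : ∀ u v, φ v ≤ w u v + φ u)
    (hψ : ∀ u v, ψ u ≤ w u v + ψ v) :
    ∀ (u : V) (l : List V) {x : V}, x ∈ u :: l →
      φ x + ψ x ≤ φ u + walkWeight w u l + ψ ((u :: l).getLast (List.cons_ne_nil u l))
  | u, l, x, hx => by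
    rcases List.mem_cons.mp hx with rfl | hx
    · rw [add_assoc]
      exact add_le_add_right (le_walkWeight_add_of_potential w hψ x l) _
    · obtain ⟨y, ys, rfl⟩ := List.exists_cons_of_ne_nil (List.ne_nil_of_mem hx)
      have hlast : (u :: y :: ys).getLast (List.cons_ne_nil u _) =
          (y :: ys).getLast (List.cons_ne_nil y ys) := List.getLast_cons _
      calc φ x + ψ x ≤ φ y + walkWeight w y ys + ψ ((y :: ys).getLast (List.cons_ne_nil y ys)) :=
            add_le_walkWeight_of_mem hφ hψ y ys hx
        _ ≤ w u y + φ u + walkWeight w y ys + ψ ((y :: ys).getLast (List.cons_ne_nil y ys)) := by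
            gcongr; exact hφ u y
        _ = φ u + walkWeight w u (y :: ys) + ψ ((u :: y :: ys).getLast (List.cons_ne_nil u _)) := by
            rw [hlast, walkWeight]; ring

end Potential

def distFromSBound {A₁ A₂ : Type} {d : ℕ} (t : ℕ) : GVert A₁ A₂ d → ℕ
  | .vS _ => 0
  | .vT _ => 6 * t + 2
  | .fwd _ => 3 * t + 1
  | .bwd _ => 4 * t + 2
  | .gj _ => 3 * t + 1
  | .o1 => 5 * t + 1
  | .o2 => 3 * t + 2
  | .o3 => 4 * t + 1
  | .o4 => 4 * t + 3

def distToTBound {A₁ A₂ : Type} {d : ℕ} (t : ℕ) : GVert A₁ A₂ d → ℕ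
  | .vS _ => 6 * t + 2
  | .vT _ => 0
  | .fwd _ => 3 * t + 1
  | .bwd _ => 4 * t + 2
  | .gj _ => 3 * t + 1
  | .o1 => 3 * t + 2
  | .o2 => 5 * t + 1
  | .o3 => 4 * t + 3
  | .o4 => 4 * t + 1

section Gadget

variable {A : Type} (k : ℕ) (part : A → ZMod k) (E : A → A → Prop) (d t : ℕ)
  (ident : A → Fin d → Bool)

theorem distFromSBound_le_gw_add (ht : 1 ≤ t)
    (u v : GVert {a : A // part a = 0} {x : A // part x ≠ 0} d) :
    (distFromSBound t v : ℝ≥0∞) ≤ gw k part E d t ident u v + distFromSBound t u := by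
  cases u <;> cases v <;> simp only [gw, distFromSBound] <;> (try split_ifs) <;>
    first | (norm_cast; omega) | simp

theorem distToTBound_le_gw_add (ht : 1 ≤ t)
    (u v : GVert {a : A // part a = 0} {x : A // part x ≠ 0} d) :
    (distToTBound t u : ℝ≥0∞) ≤ gw k part E d t ident u v + distToTBound t v := by
  cases u <;> cases v <;> simp only [gw, distToTBound] <;> (try split_ifs) <;>
    first | (norm_cast; omega) | simp

end Gadget

theorem stmt_14_general {A : Type} (k t : ℕ) (ht : 2 * k < t)
    (part : A → ZMod k) (E : A → A → Prop)
    (d : ℕ) (ident : A → Fin d → Bool)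
    (a : A) (ha : part a = 0)
    (l : List (GVert {b : A // part b = 0} {x : A // part x ≠ 0} d))
    (hlast : (GVert.vS ⟨a, ha⟩ :: l).getLast (List.cons_ne_nil _ _) = GVert.vT ⟨a, ha⟩)
    (hvisit : ∃ x ∈ GVert.vS ⟨a, ha⟩ :: l,
      x = GVert.o1 ∨ x = GVert.o2 ∨ x = GVert.o3 ∨ x = GVert.o4) :
    ((8 * t : ℕ) : ℝ≥0∞) ≤ walkWeight (gw k part E d t ident) (GVert.vS ⟨a, ha⟩) l := by
  obtain ⟨x, hx, hxo⟩ := hvisit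
  have hbound : 8 * t ≤ distFromSBound t x + distToTBound t x := by
    rcases hxo with rfl | rfl | rfl | rfl <;> simp only [distFromSBound, distToTBound] <;> omega
  have hwalk := add_le_walkWeight_of_mem (gw k part E d t ident)
    (φ := fun v => (distFromSBound t v : ℝ≥0∞)) (ψ := fun v => (distToTBound t v : ℝ≥0∞))
    (distFromSBound_le_gw_add k part E d t ident (by omega))
    (distToTBound_le_gw_add k part E d t ident (by omega))
    _ l hx
  rw [hlast] at hwalk
  simp only [distFromSBound, distToTBound, Nat.cast_zero, zero_add, add_zero] at hwalk
  calc ((8 * t : ℕ) : ℝ≥0∞) ≤ ((distFromSBound t x + distToTBound t x : ℕ) : ℝ≥0∞) := by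
        exact_mod_cast hbound
    _ ≤ _ := by push_cast; exact hwalk

/-- For `a ∈ V₁` with copies `a ∈ S` and `a′ ∈ T`, every directed
path (walk) in `G′` from `a` to `a′` that visits one of `o₁, o₂, o₃, o₄` has total weight at
least `8t`. -/
theorem stmt_14 {A : Type} (k t : ℕ) (hk : 3 ≤ k) (ht : 2 * k < t)
    (part : A → ZMod k) (E : A → A → Prop)
    (hE : ∀ u v : A, E u v → part v = part u + 1)
    (d : ℕ) (ident : A → Fin d → Bool)
    (hid₁ : ∀ a b : A, part a = 0 → part b = 0 → a ≠ b →
      (∃ i : Fin d, ident a i = true ∧ ident b i = false) ∧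
      (∃ j : Fin d, ident a j = false ∧ ident b j = true))
    (hid₂ : ∀ a b : A, part a = 0 → part b = 0 →
      (∃ i : Fin d, ident a i = true ∧ ident b i = true) ∧
      (∃ j : Fin d, ident a j = false ∧ ident b j = false))
    (a : A) (ha : part a = 0)
    (l : List (GVert {b : A // part b = 0} {x : A // part x ≠ 0} d))
    (hlast : (GVert.vS ⟨a, ha⟩ :: l).getLast (List.cons_ne_nil _ _) = GVert.vT ⟨a, ha⟩)
    (hvisit : ∃ x ∈ GVert.vS ⟨a, ha⟩ :: l,
      x = GVert.o1 ∨ x = GVert.o2 ∨ x = GVert.o3 ∨ x = GVert.o4) :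
    ((8 * t : ℕ) : ℝ≥0∞) ≤ walkWeight (gw k part E d t ident) (GVert.vS ⟨a, ha⟩) l :=
  stmt_14_general k t ht part E d ident a ha l hlast hvisit
end

section
/- In the graph G′ constructed below: if a node a ∈ V_1 does not lie on a k-cycle in G, then every directed path in G′ from the copy a ∈ S to the copy a′ ∈ T that avoids all of the nodes o_1, o_2, o_3, o_4 has total weight at least 8t. -/
open scoped ENNReal

/-!
The bound comes from a potential `Φ` on the omni-free vertices with `Φ (a ∈ S) = 0`,
`Φ (a′ ∈ T) = 8t` and `Φ v ≤ Φ u + w(u, v)` on every edge `u → v`; summing along the walk gives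
the claim.  The only delicate vertices are the forward copies: `x^fwd` gets `3t` plus its layer
index when `G` has a layer-by-layer path from `a` to `x`, and `6t + 3` otherwise.  An edge
`x^fwd → a′` from a vertex of the first kind would close a `k`-cycle through `a`, so every such
edge starts at a vertex of the second kind and costs the full `8t`.
-/

theorem ZMod.val_add_one_of_ne_zero {n : ℕ} [NeZero n] {z : ZMod n} (h : z + 1 ≠ 0) :
    (z + 1).val = z.val + 1 := by
  have hcast : ((z.val + 1 : ℕ) : ZMod n) = z + 1 := by
    rw [Nat.cast_add, ZMod.natCast_zmod_val, Nat.cast_one]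
  have hlt : z.val + 1 < n := by
    refine lt_of_le_of_ne (ZMod.val_lt z) fun heq => h ?_
    rw [← hcast, heq, ZMod.natCast_self]
  rw [← hcast, ZMod.val_cast_of_lt hlt]

theorem ZMod.val_eq_sub_one_of_add_one_eq_zero {n : ℕ} [NeZero n] {z : ZMod n}
    (h : z + 1 = 0) : z.val = n - 1 := by
  obtain ⟨m, rfl⟩ : ∃ m, n = m + 1 := Nat.exists_eq_succ_of_ne_zero (NeZero.ne n)
  rw [eq_neg_of_add_eq_zero_left h, ZMod.val_neg_one, Nat.add_sub_cancel]

theorem le_walkWeight_of_potential {V : Type*} (w : V → V → ℝ≥0∞) (P : V → Prop)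
    (D : V → ℝ≥0∞) (hD : ∀ u v, P u → P v → D v ≤ D u + w u v) :
    ∀ (u : V) (l : List V), (∀ x ∈ u :: l, P x) →
      D ((u :: l).getLast (List.cons_ne_nil u l)) ≤ D u + walkWeight w u l
  | u, [], _ => by simp [walkWeight]
  | u, x :: xs, hP => by
    have ih := le_walkWeight_of_potential w P D hD x xs fun y hy => hP y (by simp [hy])
    calc D ((u :: x :: xs).getLast _) = D ((x :: xs).getLast _) := by rw [List.getLast_cons]
      _ ≤ D x + walkWeight w x xs := ih
      _ ≤ D u + w u x + walkWeight w x xs := by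
        gcongr; exact hD u x (hP u (by simp)) (hP x (by simp))
      _ = D u + walkWeight w u (x :: xs) := by rw [walkWeight, add_assoc]

section Reach

variable {A : Type} (E : A → A → Prop)

def ReachesIn (n : ℕ) (a x : A) : Prop :=
  ∃ c : ℕ → A, c 0 = a ∧ c n = x ∧ ∀ i < n, E (c i) (c (i + 1))

variable {E}

theorem ReachesIn.of_rel {a x : A} (h : E a x) : ReachesIn E 1 a x :=
  ⟨fun i => if i = 0 then a else x, rfl, rfl, fun i hi => by
    obtain rfl : i = 0 := by omega
    exact h⟩

theorem ReachesIn.tail {n : ℕ} {a x y : A} (h : ReachesIn E n a x) (hxy : E x y) :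
    ReachesIn E (n + 1) a y := by
  obtain ⟨c, hc0, hcn, hc⟩ := h
  refine ⟨fun i => if i = n + 1 then y else c i, by simpa using hc0, by simp, fun i hi => ?_⟩
  rcases Nat.lt_or_ge i n with hin | hin
  · dsimp only
    rw [if_neg (by omega), if_neg (by omega)]
    exact hc i hin
  · obtain rfl : i = n := by omega
    simpa [hcn] using hxy

theorem liesOnKCycle_of_reachesIn {k : ℕ} {a x : A} (h : ReachesIn E (k - 1) a x)
    (hxa : E x a) : liesOnKCycle E k a := by
  obtain ⟨c, hc0, hcx, hc⟩ := h
  exact ⟨c, hc0, hc, hcx ▸ hxa⟩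

end Reach

section FwdPotential

variable {A : Type} {k : ℕ} {part : A → ZMod k} {E : A → A → Prop} {t : ℕ} {a : A}

theorem val_part_eq_add_one_of_rel [NeZero k] (hE : ∀ u v, E u v → part v = part u + 1)
    {x y : A} (hxy : E x y) (hy : part y ≠ 0) : (part y).val = (part x).val + 1 := by
  rw [hE x y hxy] at hy ⊢
  exact ZMod.val_add_one_of_ne_zero hy

variable (part E t a)

open Classical in
noncomputable def fwdPotential (x : {x : A // part x ≠ 0}) : ℕ :=
  if ReachesIn E (part x.1).val a x.1 then 3 * t + (part x.1).val else 6 * t + 3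

variable {part E t a}

theorem fwdPotential_le [NeZero k] (hkt : k ≤ 3 * t) (x : {x : A // part x ≠ 0}) :
    fwdPotential part E t a x ≤ 6 * t + 3 := by
  have := ZMod.val_lt (part x.1)
  unfold fwdPotential; split_ifs <;> omega

theorem le_fwdPotential (x : {x : A // part x ≠ 0}) :
    3 * t + 1 ≤ fwdPotential part E t a x := by
  have := ZMod.val_pos.2 x.2
  unfold fwdPotential; split_ifs <;> omega

theorem fwdPotential_of_rel_start [NeZero k] (hE : ∀ u v, E u v → part v = part u + 1)
    (ha : part a = 0) {x : {x : A // part x ≠ 0}} (hax : E a x.1) :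
    fwdPotential part E t a x = 3 * t + 1 := by
  have hval : (part x.1).val = 1 := by simpa [ha] using val_part_eq_add_one_of_rel hE hax x.2
  rw [fwdPotential, hval, if_pos (ReachesIn.of_rel hax)]

theorem fwdPotential_le_add_one [NeZero k] (hkt : k ≤ 3 * t)
    (hE : ∀ u v, E u v → part v = part u + 1) {x y : {x : A // part x ≠ 0}} (hxy : E x.1 y.1) :
    fwdPotential part E t a y ≤ fwdPotential part E t a x + 1 := by
  by_cases hx : ReachesIn E (part x.1).val a x.1
  · have hval := val_part_eq_add_one_of_rel hE hxy y.2
    rw [fwdPotential, fwdPotential, if_pos hx, hval, if_pos (hx.tail hxy)]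
    omega
  · have hy := fwdPotential_le (E := E) (a := a) hkt y
    have hx' : fwdPotential part E t a x = 6 * t + 3 := if_neg hx
    omega

theorem fwdPotential_of_rel_end [NeZero k] (hE : ∀ u v, E u v → part v = part u + 1)
    (ha : part a = 0) (hno : ¬ liesOnKCycle E k a) {x : {x : A // part x ≠ 0}}
    (hxa : E x.1 a) : fwdPotential part E t a x = 6 * t + 3 := by
  have hval : (part x.1).val = k - 1 :=
    ZMod.val_eq_sub_one_of_add_one_eq_zero (by rw [← hE _ _ hxa, ha])
  rw [fwdPotential, if_neg fun hx => hno (liesOnKCycle_of_reachesIn (hval ▸ hx) hxa)]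

end FwdPotential

section OmniFree

variable {A : Type} {k : ℕ} (part : A → ZMod k) (E : A → A → Prop) (d t : ℕ)
  (ident : A → Fin d → Bool) (a : A)

open Classical in
noncomputable def omniFreePotential : GVert {b : A // part b = 0} {x : A // part x ≠ 0} d → ℕ
  | .vS b => if b.1 = a then 0 else 3 * t + 2
  | .vT c => if c.1 = a then 8 * t else 6 * t + 2
  | .fwd x => fwdPotential part E t a x
  | .bwd _ => 3 * t + 1
  | .gj j => if ident a j then 3 * t + 1 else 5 * t + 1
  | _ => 0

variable {part E d t ident a}

theorem omniFreePotential_le_add_gw [NeZero k] (hkt : k ≤ 3 * t)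
    (hE : ∀ u v, E u v → part v = part u + 1) (ha : part a = 0) (hno : ¬ liesOnKCycle E k a)
    {u : GVert {b : A // part b = 0} {x : A // part x ≠ 0} d}
    (hu : ¬(u = .o1 ∨ u = .o2 ∨ u = .o3 ∨ u = .o4))
    (v : GVert {b : A // part b = 0} {x : A // part x ≠ 0} d) :
    (omniFreePotential part E d t ident a v : ℝ≥0∞) ≤
      omniFreePotential part E d t ident a u + gw k part E d t ident u v := by
  cases u
  case o1 | o2 | o3 | o4 => simp at hu
  all_goals cases v
  case vS.fwd b y =>
    simp only [gw, omniFreePotential]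
    split_ifs with hba hby hby
    · subst hba
      rw [fwdPotential_of_rel_start hE ha hby]
      simp
    · simp only [add_top, le_top]
    · have := fwdPotential_le (E := E) (a := a) hkt y
      exact_mod_cast (by omega : _ ≤ 3 * t + 2 + (3 * t + 1))
    · simp only [add_top, le_top]
  case fwd.fwd x y =>
    simp only [gw, omniFreePotential]
    split_ifs with hxy
    · exact_mod_cast fwdPotential_le_add_one hkt hE hxy
    · simp only [add_top, le_top]
  case fwd.vT x c =>
    simp only [gw, omniFreePotential]
    split_ifs with hca hxc hxc
    · subst hca
      rw [fwdPotential_of_rel_end hE ha hno hxc]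
      norm_cast; omega
    · simp only [add_top, le_top]
    · have := le_fwdPotential (t := t) (E := E) (a := a) x
      norm_cast; omega
    · simp only [add_top, le_top]
  -- on every other edge both potentials are explicit constants
  all_goals
    simp only [gw, omniFreePotential]
    (try split_ifs) <;> (try subst_vars) <;>
      first | simp only [add_top, le_top] | (norm_cast <;> omega)

end OmniFree

theorem stmt_15_general {A : Type} (k t : ℕ) (hk : 3 ≤ k) (ht : 2 * k < t)
    (part : A → ZMod k) (E : A → A → Prop)
    (hE : ∀ u v : A, E u v → part v = part u + 1)
    (d : ℕ) (ident : A → Fin d → Bool)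
    (a : A) (ha : part a = 0) (hno : ¬ liesOnKCycle E k a)
    (l : List (GVert {b : A // part b = 0} {x : A // part x ≠ 0} d))
    (hlast : (GVert.vS ⟨a, ha⟩ :: l).getLast (List.cons_ne_nil _ _) = GVert.vT ⟨a, ha⟩)
    (havoid : ∀ x ∈ GVert.vS ⟨a, ha⟩ :: l,
      ¬(x = GVert.o1 ∨ x = GVert.o2 ∨ x = GVert.o3 ∨ x = GVert.o4)) :
    ((8 * t : ℕ) : ℝ≥0∞) ≤ walkWeight (gw k part E d t ident) (GVert.vS ⟨a, ha⟩) l := by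
  have : NeZero k := ⟨by omega⟩
  have key := le_walkWeight_of_potential (gw k part E d t ident) _
    (fun v => (omniFreePotential part E d t ident a v : ℝ≥0∞))
    (fun _ v hu _ => omniFreePotential_le_add_gw (by omega) hE ha hno hu v) _ l havoid
  rw [hlast] at key
  simpa [omniFreePotential] using key

/-- If `a ∈ V₁` does not lie on a `k`-cycle of `G`, then every
directed path (walk) in `G′` from the copy `a ∈ S` to the copy `a′ ∈ T` that avoids all of
`o₁, o₂, o₃, o₄` has total weight at least `8t`. -/
theorem stmt_15 {A : Type} (k t : ℕ) (hk : 3 ≤ k) (ht : 2 * k < t)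
    (part : A → ZMod k) (E : A → A → Prop)
    (hE : ∀ u v : A, E u v → part v = part u + 1)
    (d : ℕ) (ident : A → Fin d → Bool)
    (hid₁ : ∀ a b : A, part a = 0 → part b = 0 → a ≠ b →
      (∃ i : Fin d, ident a i = true ∧ ident b i = false) ∧
      (∃ j : Fin d, ident a j = false ∧ ident b j = true))
    (hid₂ : ∀ a b : A, part a = 0 → part b = 0 →
      (∃ i : Fin d, ident a i = true ∧ ident b i = true) ∧
      (∃ j : Fin d, ident a j = false ∧ ident b j = false))
    (a : A) (ha : part a = 0) (hno : ¬ liesOnKCycle E k a)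
    (l : List (GVert {b : A // part b = 0} {x : A // part x ≠ 0} d))
    (hlast : (GVert.vS ⟨a, ha⟩ :: l).getLast (List.cons_ne_nil _ _) = GVert.vT ⟨a, ha⟩)
    (havoid : ∀ x ∈ GVert.vS ⟨a, ha⟩ :: l,
      ¬(x = GVert.o1 ∨ x = GVert.o2 ∨ x = GVert.o3 ∨ x = GVert.o4)) :
    ((8 * t : ℕ) : ℝ≥0∞) ≤ walkWeight (gw k part E d t ident) (GVert.vS ⟨a, ha⟩) l :=
  stmt_15_general k t hk ht part E hE d ident a ha hno l hlast havoid
end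

section
/- Let ω ∈ [2, 3) be a real number and t ≥ 0 an integer. Define α = (2·(2/(ω−1))^t − (ω−1)²/2) / ((2/(ω−1))^t·(7−ω) − (ω²−1)/2) (the denominator is positive), and define the sequence α_0 = 1 − α and α_{i+1} = (2/(ω−1))·α_i + 1 − (4/(ω−1))·α for i = 0, 1, …, t. Then α_{t+1} = α; equivalently, 2α = α_i + (1 − α_{i+1})·(ω−1)/2 for every 0 ≤ i ≤ t. -/
/-!
The recursion is affine with ratio `q = 2/(ω-1) ≠ 1` and fixed point `f = (ω-1-4α)/(ω-3)`, so
`a i - f = q ^ i * (a 0 - f)`. With `a 0 = 1 - α`, the condition `a (t+1) = α` is a linear equation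
in `α`, and the closed formula for `α` is its solution.
-/

theorem eq_pow_mul_of_forall_le_eq_mul {M : Type*} [Monoid M] {b : ℕ → M} {q : M} {t : ℕ}
    (hb : ∀ i ≤ t, b (i + 1) = q * b i) : ∀ i ≤ t + 1, b i = q ^ i * b 0 := by
  intro i hi
  induction i with
  | zero => rw [pow_zero, one_mul]
  | succ n ih =>
    rw [hb n (by omega), ih (by omega), pow_succ', mul_assoc]

theorem denominator_pos {ω : ℝ} (h1 : 1 < ω) (h3 : ω < 3) (t : ℕ) :
    0 < (2 / (ω - 1)) ^ t * (7 - ω) - (ω ^ 2 - 1) / 2 := by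
  have hq : 1 ≤ 2 / (ω - 1) := by rw [le_div_iff₀ (by linarith)]; linarith
  have hQ : 1 ≤ (2 / (ω - 1)) ^ t := one_le_pow₀ hq
  nlinarith

theorem sub_fixedPoint_eq_mul {ω α Q : ℝ} (h1 : ω - 1 ≠ 0) (h3 : ω - 3 ≠ 0)
    (hα : α * (Q * (7 - ω) - (ω ^ 2 - 1) / 2) = 2 * Q - (ω - 1) ^ 2 / 2) :
    α - (ω - 1 - 4 * α) / (ω - 3) =
      2 / (ω - 1) * Q * (1 - α - (ω - 1 - 4 * α) / (ω - 3)) := by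
  field_simp
  linear_combination (-2) * hα

/-- For `ω ∈ [2,3)` and the exponent `α` defined by the closed formula
(whose denominator is positive), the sequence `α_0 = 1 - α`,
`α_{i+1} = (2/(ω-1)) α_i + 1 - (4/(ω-1)) α` satisfies `α_{t+1} = α`, equivalently
`2α = α_i + (1 - α_{i+1})(ω-1)/2` for all `0 ≤ i ≤ t`. -/
theorem stmt_17 (ω : ℝ) (hω : ω ∈ Set.Ico (2 : ℝ) 3) (t : ℕ)
    (α : ℝ)
    (hα : α = (2 * (2 / (ω - 1)) ^ t - (ω - 1) ^ 2 / 2) /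
      ((2 / (ω - 1)) ^ t * (7 - ω) - (ω ^ 2 - 1) / 2))
    (a : ℕ → ℝ) (ha0 : a 0 = 1 - α)
    (harec : ∀ i ≤ t, a (i + 1) = (2 / (ω - 1)) * a i + 1 - (4 / (ω - 1)) * α) :
    0 < (2 / (ω - 1)) ^ t * (7 - ω) - (ω ^ 2 - 1) / 2 ∧
    a (t + 1) = α ∧
    (∀ i ≤ t, 2 * α = a i + (1 - a (i + 1)) * (ω - 1) / 2) := by
  obtain ⟨h2, h3⟩ := hω
  have h1 : ω - 1 ≠ 0 := by linarith
  have h3' : ω - 3 ≠ 0 := by linarith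
  have hD := denominator_pos (by linarith) h3 t
  set f := (ω - 1 - 4 * α) / (ω - 3)
  have hstep : ∀ i ≤ t, a (i + 1) - f = 2 / (ω - 1) * (a i - f) := by
    intro i hi
    rw [harec i hi]
    simp only [f]
    field_simp
    ring
  have hgeom := eq_pow_mul_of_forall_le_eq_mul (b := fun i => a i - f) hstep (t + 1) le_rfl
  have hfix : α - f = 2 / (ω - 1) * (2 / (ω - 1)) ^ t * (1 - α - f) :=
    sub_fixedPoint_eq_mul h1 h3' (by rw [hα, div_mul_cancel₀ _ hD.ne'])
  refine ⟨hD, ?_, fun i hi => ?_⟩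
  · rw [ha0, pow_succ'] at hgeom
    linear_combination hgeom - hfix
  · rw [harec i hi]
    field_simp
    ring
end

section
/- Let ω ∈ [2, 3) be a real number and t ≥ 0 an integer. Define α = (2·(2/(ω−1))^t − (ω−1)²/2) / ((2/(ω−1))^t·(7−ω) − (ω²−1)/2), and define the sequence α_0 = 1 − α and α_{i+1} = (2/(ω−1))·α_i + 1 − (4/(ω−1))·α for i = 0, 1, …, t. Then: (i) α ≥ 2/(7−ω); (ii) the sequence is strictly decreasing, i.e. α_0 > α_1 > ⋯ > α_t > α_{t+1}; and (iii) for every 0 ≤ i ≤ t, 1 − α_{i+1} + α_i ≥ (1 − α_{i+1})·(ω+1)/2. -/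
/-- For `ω ∈ [2,3)` and the exponent sequence `α_0 = 1 - α`,
`α_{i+1} = (2/(ω-1)) α_i + 1 - (4/(ω-1)) α` with `α` given by the closed formula:
(i) `α ≥ 2/(7-ω)`; (ii) the sequence is strictly decreasing up to index `t+1`; and
(iii) `1 - α_{i+1} + α_i ≥ (1 - α_{i+1})(ω+1)/2` for all `0 ≤ i ≤ t`. -/
theorem stmt_18 (ω : ℝ) (hω : ω ∈ Set.Ico (2 : ℝ) 3) (t : ℕ)
    (α : ℝ)
    (hα : α = (2 * (2 / (ω - 1)) ^ t - (ω - 1) ^ 2 / 2) /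
      ((2 / (ω - 1)) ^ t * (7 - ω) - (ω ^ 2 - 1) / 2))
    (a : ℕ → ℝ) (ha0 : a 0 = 1 - α)
    (harec : ∀ i ≤ t, a (i + 1) = (2 / (ω - 1)) * a i + 1 - (4 / (ω - 1)) * α) :
    2 / (7 - ω) ≤ α ∧
    (∀ i ≤ t, a (i + 1) < a i) ∧
    (∀ i ≤ t, (1 - a (i + 1)) * (ω + 1) / 2 ≤ 1 - a (i + 1) + a i) := by
  obtain ⟨hω2, hω3⟩ := hω
  have hw1 : (0:ℝ) < ω - 1 := by linarith
  have hw1' : ω - 1 ≠ 0 := ne_of_gt hw1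
  have hw3 : (0:ℝ) < 3 - ω := by linarith
  have hw7 : (0:ℝ) < 7 - ω := by linarith
  set q : ℝ := 2 / (ω - 1) with hq
  have hq1 : 1 < q := by rw [hq, lt_div_iff₀ hw1]; linarith
  have hq0 : (0:ℝ) < q := by linarith
  have hqm1 : (0:ℝ) < q - 1 := by linarith
  have hqm1' : q - 1 ≠ 0 := ne_of_gt hqm1
  obtain ⟨s, hs⟩ : ∃ s : ℝ, q ^ t = s := ⟨_, rfl⟩
  have hs1 : (1:ℝ) ≤ s := hs ▸ one_le_pow₀ hq1.le
  rw [hs] at hα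
  have hD : 0 < s * (7 - ω) - (ω ^ 2 - 1) / 2 := by
    nlinarith [mul_nonneg (sub_nonneg.mpr hs1) hw7.le,
      mul_pos hw3 (show (0:ℝ) < ω by linarith)]
  have hD' : s * (7 - ω) - (ω ^ 2 - 1) / 2 ≠ 0 := ne_of_gt hD
  have hαgt : 2 / (7 - ω) < α := by
    rw [hα, div_lt_div_iff₀ hw7 hD]
    nlinarith [mul_pos hw1 (mul_pos hw3 hw3)]
  have h2α : 2 < α * (7 - ω) := (div_lt_iff₀ hw7).mp hαgt
  set X : ℝ := (2 * q * α - 1) / (q - 1) with hX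
  have hfix : q * X + 1 - 2 * q * α = X := by
    rw [hX]; field_simp; ring
  have h4q : ∀ i, i ≤ t → a (i + 1) = q * a i + 1 - 2 * q * α := by
    intro i hi
    rw [harec i hi, hq]; ring
  have hclosed : ∀ i, i ≤ t + 1 → a i = X + q ^ i * ((1 - α) - X) := by
    intro i hi
    induction i with
    | zero => rw [ha0, pow_zero]; ring
    | succ n ih =>
      have hn : n ≤ t := by omega
      rw [h4q n hn, ih (by omega), pow_succ]
      linear_combination hfix
  have hw3' : (3:ℝ) - ω ≠ 0 := ne_of_gt hw3
  have hqrel : q * (ω - 1) = 2 := by rw [hq]; exact div_mul_cancel₀ _ hw1'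
  have hXrel : X * (q - 1) = 2 * q * α - 1 := by rw [hX]; exact div_mul_cancel₀ _ hqm1'
  have hαrel : α * (s * (7 - ω) - (ω ^ 2 - 1) / 2) = 2 * s - (ω - 1) ^ 2 / 2 := by
    rw [hα]; exact div_mul_cancel₀ _ hD'
  have hXe : X * (3 - ω) = 4 * α - ω + 1 := by
    linear_combination (ω - 1) * hXrel + (2 * α - X) * hqrel
  have hAt : a (t + 1) = α := by
    rw [hclosed (t + 1) le_rfl, pow_succ, hs]
    have hG : (X + s * q * (1 - α - X) - α) * ((3 - ω) * (ω - 1)) = 0 := by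
      linear_combination ((ω - 1) - 2 * s) * hXe + (s * (3 - ω) * (1 - α - X)) * hqrel
        - 2 * hαrel
    have h0 : X + s * q * (1 - α - X) - α = 0 :=
      (mul_eq_zero.mp hG).resolve_right (mul_ne_zero hw3' hw1')
    linarith
  have hC : (1 - α) - X < 0 := by
    have hCrel : ((1 - α) - X) * (3 - ω) = 2 - (7 - ω) * α := by
      linear_combination -hXe
    have e : (1 - α) - X = (2 - (7 - ω) * α) / (3 - ω) := by
      rw [eq_div_iff hw3']; exact hCrel
    rw [e]
    exact div_neg_of_neg_of_pos (by linarith) hw3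
  have hmono : ∀ i, i ≤ t → a (i + 1) < a i := by
    intro i hi
    have e1 := hclosed i (by omega)
    have e2 := hclosed (i + 1) (by omega)
    have e3 : a (i + 1) - a i = q ^ i * (q - 1) * ((1 - α) - X) := by
      rw [e1, e2, pow_succ]; ring
    have := mul_neg_of_pos_of_neg (mul_pos (pow_pos hq0 i) hqm1) hC
    linarith
  have hstep : ∀ k, k ≤ t + 1 → a (t + 1) ≤ a (t + 1 - k) := by
    intro k hk
    induction k with
    | zero => simp
    | succ n ih =>
      have hn : n ≤ t := by omega
      have h1 : t + 1 - n = (t - n) + 1 := by omega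
      have h2 := hmono (t - n) (by omega)
      have h3 := ih (by omega)
      rw [h1] at h3
      rw [show t + 1 - (n + 1) = t - n from by omega]
      linarith
  have hαle : ∀ i, i ≤ t → α ≤ a i := by
    intro i hi
    have h := hstep (t + 1 - i) (by omega)
    rw [show t + 1 - (t + 1 - i) = i from by omega] at h
    rw [hAt] at h
    exact h
  refine ⟨le_of_lt hαgt, fun i hi => hmono i hi, fun i hi => ?_⟩
  have hai := hαle i hi
  have e : (1 - a (i + 1) + a i) - (1 - a (i + 1)) * (ω + 1) / 2 = 2 * (a i - α) := by
    rw [h4q i hi, hq]; field_simp; ring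
  linarith
end

section
/- Let M ≥ 1 be an integer and α ≥ 2 a real number such that the fractional part of M·α is less than 1/2, and set β = ⌊M·α − 1⌋ (so β > M·α − 1.5) and ε = 1/(4(β + 1.5)). Then for all real numbers a, b: (i) if |a − b| ≥ α then |⌊M·a⌋ − ⌊M·b⌋| ≥ M·α − 1 ≥ β; (ii) if |a − b| ≤ 1 then |⌊M·a⌋ − ⌊M·b⌋| ≤ M; and (iii) if |a| ≤ (0.5 + ε)·α then |⌊M·a⌋| ≤ 0.5·β + 2. -/
/-! Since `⌊x⌋ - ⌊y⌋` differs from `x - y` by less than `1`, rounding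
`M · a` to integers distorts distances and absolute values by less than one unit. The assumption
`fract (M α) < 1/2` makes `β = ⌊M α⌋ - 1` exceed `M α - 3/2`, and `ε = 1/(4(β + 3/2))` is chosen
so that `(1/2 + ε) · M α ≤ (β + 3/2)/2 + 1/4 = β/2 + 1`. -/

namespace Int

variable {R : Type*} [Field R] [LinearOrder R] [IsStrictOrderedRing R] [FloorRing R]

theorem abs_floor_sub_floor_sub_sub_lt_one (x y : R) :
    |(⌊x⌋ : R) - ⌊y⌋ - (x - y)| < 1 := by
  have hx₁ := floor_le x
  have hx₂ := lt_floor_add_one x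
  have hy₁ := floor_le y
  have hy₂ := lt_floor_add_one y
  rw [abs_sub_lt_iff]
  constructor <;> linarith

theorem abs_sub_sub_one_lt_abs_floor_sub_floor (x y : R) :
    |x - y| - 1 < |(⌊x⌋ : R) - ⌊y⌋| := by
  have := abs_sub_abs_le_abs_sub (x - y) ((⌊x⌋ : R) - ⌊y⌋)
  rw [abs_sub_comm (x - y)] at this
  linarith [abs_floor_sub_floor_sub_sub_lt_one x y]

theorem abs_floor_sub_floor_le_of_abs_sub_le {x y : R} {n : ℤ} (h : |x - y| ≤ n) :
    |(⌊x⌋ : R) - ⌊y⌋| ≤ n := by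
  have hlt : |(⌊x⌋ : R) - ⌊y⌋| < n + 1 := by
    have := abs_sub_abs_le_abs_sub ((⌊x⌋ : R) - ⌊y⌋) (x - y)
    linarith [abs_floor_sub_floor_sub_sub_lt_one x y]
  have hlt' : |⌊x⌋ - ⌊y⌋| < n + 1 := by exact_mod_cast hlt
  exact_mod_cast lt_add_one_iff.mp hlt'

theorem abs_floor_lt_abs_add_one (x : R) : |(⌊x⌋ : R)| < |x| + 1 := by
  have h := abs_floor_sub_floor_sub_sub_lt_one x 0
  rw [floor_zero, cast_zero, sub_zero, sub_zero] at h
  linarith [abs_sub_abs_le_abs_sub (⌊x⌋ : R) x]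

theorem sub_sub_lt_floor_sub_one_of_fract_lt {x c : R} (h : fract x < c) :
    x - 1 - c < ⌊x - 1⌋ := by
  rw [floor_sub_one, cast_sub, cast_one, ← self_sub_fract x]
  linarith

end Int

theorem one_half_add_one_div_four_mul_le {R : Type*} [Field R] [LinearOrder R]
    [IsStrictOrderedRing R] {s t : R} (ht : 0 < t) (hst : s ≤ t) :
    (1 / 2 + 1 / (4 * t)) * s ≤ t / 2 + 1 / 4 :=
  calc (1 / 2 + 1 / (4 * t)) * s ≤ (1 / 2 + 1 / (4 * t)) * t :=
        mul_le_mul_of_nonneg_left hst (by positivity)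
    _ = t / 2 + 1 / 4 := by field_simp

theorem stmt_19_general (M : ℕ) (α : ℝ) (hα : 2 ≤ α)
    (hfrac : Int.fract ((M : ℝ) * α) < 1 / 2)
    (β : ℤ) (hβ : β = ⌊(M : ℝ) * α - 1⌋)
    (ε : ℝ) (hε : ε = 1 / (4 * ((β : ℝ) + 1.5))) :
    ((M : ℝ) * α - 1.5 < (β : ℝ)) ∧
    ((β : ℝ) ≤ (M : ℝ) * α - 1) ∧
    (∀ a b : ℝ, α ≤ |a - b| →
      (M : ℝ) * α - 1 ≤ |(⌊(M : ℝ) * a⌋ : ℝ) - (⌊(M : ℝ) * b⌋ : ℝ)|) ∧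
    (∀ a b : ℝ, |a - b| ≤ 1 →
      |(⌊(M : ℝ) * a⌋ : ℝ) - (⌊(M : ℝ) * b⌋ : ℝ)| ≤ (M : ℝ)) ∧
    (∀ a : ℝ, |a| ≤ (0.5 + ε) * α → |(⌊(M : ℝ) * a⌋ : ℝ)| ≤ 0.5 * (β : ℝ) + 2) := by
  have hM₀ : (0 : ℝ) ≤ M := M.cast_nonneg
  have hM₀α : 0 ≤ (M : ℝ) * α := mul_nonneg hM₀ (by linarith)
  have abs_mul_sub (a b : ℝ) : |(M : ℝ) * a - M * b| = M * |a - b| := by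
    rw [← mul_sub, abs_mul, Nat.abs_cast]
  have hβ_lower : (M : ℝ) * α - 1.5 < β := by
    have := Int.sub_sub_lt_floor_sub_one_of_fract_lt hfrac
    rw [← hβ] at this
    linarith
  refine ⟨hβ_lower, hβ ▸ Int.floor_le _, fun a b hab => ?_, fun a b hab => ?_, fun a ha => ?_⟩
  · have := Int.abs_sub_sub_one_lt_abs_floor_sub_floor ((M : ℝ) * a) (M * b)
    rw [abs_mul_sub] at this
    linarith [mul_le_mul_of_nonneg_left hab hM₀]
  · have h : |(M : ℝ) * a - M * b| ≤ (M : ℤ) := by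
      rw [abs_mul_sub, Int.cast_natCast]
      simpa using mul_le_mul_of_nonneg_left hab hM₀
    simpa using Int.abs_floor_sub_floor_le_of_abs_sub_le h
  · have hMa : |(M : ℝ) * a| ≤ 0.5 * β + 1 :=
      calc |(M : ℝ) * a| = M * |a| := by rw [abs_mul, Nat.abs_cast]
        _ ≤ M * ((0.5 + ε) * α) := mul_le_mul_of_nonneg_left ha hM₀
        _ = (1 / 2 + 1 / (4 * (β + 1.5))) * (M * α) := by rw [hε]; ring
        _ ≤ (β + 1.5) / 2 + 1 / 4 :=
          one_half_add_one_div_four_mul_le (by linarith) (by linarith)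
        _ = 0.5 * β + 1 := by ring
    linarith [Int.abs_floor_lt_abs_add_one ((M : ℝ) * a)]

/-- Rounding step for the bounded `ℓ∞` Closest-Pair instance: with
`β = ⌊Mα - 1⌋` (so `β > Mα - 1.5`, using that the fractional part of `Mα` is `< 1/2`) and
`ε = 1/(4(β + 1.5))`: (i) `|a - b| ≥ α` implies `|⌊Ma⌋ - ⌊Mb⌋| ≥ Mα - 1 ≥ β`;
(ii) `|a - b| ≤ 1` implies `|⌊Ma⌋ - ⌊Mb⌋| ≤ M`; and (iii) `|a| ≤ (0.5+ε)α` implies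
`|⌊Ma⌋| ≤ 0.5β + 2`. -/
theorem stmt_19 (M : ℕ) (hM : 1 ≤ M) (α : ℝ) (hα : 2 ≤ α)
    (hfrac : Int.fract ((M : ℝ) * α) < 1 / 2)
    (β : ℤ) (hβ : β = ⌊(M : ℝ) * α - 1⌋)
    (ε : ℝ) (hε : ε = 1 / (4 * ((β : ℝ) + 1.5))) :
    ((M : ℝ) * α - 1.5 < (β : ℝ)) ∧
    ((β : ℝ) ≤ (M : ℝ) * α - 1) ∧
    (∀ a b : ℝ, α ≤ |a - b| →
      (M : ℝ) * α - 1 ≤ |(⌊(M : ℝ) * a⌋ : ℝ) - (⌊(M : ℝ) * b⌋ : ℝ)|) ∧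
    (∀ a b : ℝ, |a - b| ≤ 1 →
      |(⌊(M : ℝ) * a⌋ : ℝ) - (⌊(M : ℝ) * b⌋ : ℝ)| ≤ (M : ℝ)) ∧
    (∀ a : ℝ, |a| ≤ (0.5 + ε) * α → |(⌊(M : ℝ) * a⌋ : ℝ)| ≤ 0.5 * (β : ℝ) + 2) :=
  stmt_19_general M α hα hfrac β hβ ε hε
end
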